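/- arXiv:2505.11399 — 9 statements merged into one kernel-verified Lean document; each statement's English description precedes it below -/
import Mathlib

section
/- Let 0 < ν ≤ μ and let A be a real symmetric 2×2 matrix satisfying ν|ξ|² ≤ ξᵀAξ ≤ μ|ξ|² for every ξ ∈ ℝ². Then there exists a real number a ∈ [μ⁻¹, ν⁻¹] such that for every real 2×2 matrix X one has |tr X − a·tr(AX)| ≤ (1 − ν/μ)·‖X‖. -/
open Matrix

set_option maxHeartbeats 2000000 in
/-- **Campanato condition** (Lemma `Campanato` of the paper):
for a uniformly elliptic symmetric 2×2 matrix `A` with ellipticity constants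
`0 < ν ≤ μ`, there is `a ∈ [μ⁻¹, ν⁻¹]` such that for every real 2×2 matrix `X`,
`|tr X − a · tr (A X)| ≤ (1 − ν/μ) ‖X‖` with `‖X‖` the Frobenius norm. -/
theorem campanato_condition (ν μ : ℝ) (hν : 0 < ν) (hνμ : ν ≤ μ)
    (A : Matrix (Fin 2) (Fin 2) ℝ) (hA : A.IsSymm)
    (hlow : ∀ ξ : Fin 2 → ℝ, ν * (ξ 0 ^ 2 + ξ 1 ^ 2) ≤ ξ ⬝ᵥ A.mulVec ξ)
    (hup : ∀ ξ : Fin 2 → ℝ, ξ ⬝ᵥ A.mulVec ξ ≤ μ * (ξ 0 ^ 2 + ξ 1 ^ 2)) :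
    ∃ a : ℝ, a ∈ Set.Icc μ⁻¹ ν⁻¹ ∧
      ∀ X : Matrix (Fin 2) (Fin 2) ℝ,
        |X.trace - a * (A * X).trace| ≤
          (1 - ν / μ) * Real.sqrt (∑ i : Fin 2, ∑ j : Fin 2, X i j ^ 2) := by
  have hμ : 0 < μ := lt_of_lt_of_le hν hνμ
  have hq' : A 1 0 = A 0 1 := hA.apply 0 1
  set p := A 0 0 with hp
  set q := A 0 1 with hq
  set r := A 1 1 with hr
  have key : ∀ x y : ℝ, (![x,y]) ⬝ᵥ A.mulVec ![x,y]
      = p * x^2 + 2 * q * x * y + r * y^2 := by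
    intro x y
    simp [dotProduct, Matrix.mulVec, Fin.sum_univ_two, hq']
    ring
  have hup' : ∀ x y : ℝ, p * x^2 + 2 * q * x * y + r * y^2 ≤ μ * (x^2 + y^2) := by
    intro x y; have := hup ![x,y]; rw [key] at this; simpa using this
  have hlow' : ∀ x y : ℝ, ν * (x^2 + y^2) ≤ p * x^2 + 2 * q * x * y + r * y^2 := by
    intro x y; have := hlow ![x,y]; rw [key] at this; simpa using this
  have hpμ : p ≤ μ := by have := hup' 1 0; nlinarith
  have hrμ : r ≤ μ := by have := hup' 0 1; nlinarith
  have hpν : ν ≤ p := by have := hlow' 1 0; nlinarith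
  have hrν : ν ≤ r := by have := hlow' 0 1; nlinarith
  have hupq : q^2 ≤ (μ - p) * (μ - r) := by
    have h := discrim_le_zero (a := μ - p) (b := -2*q) (c := μ - r)
      (fun t => by nlinarith [hup' t 1])
    rw [discrim] at h; nlinarith
  have hlowq : q^2 ≤ (p - ν) * (r - ν) := by
    have h := discrim_le_zero (a := p - ν) (b := 2*q) (c := r - ν)
      (fun t => by nlinarith [hlow' t 1])
    rw [discrim] at h; nlinarith
  set D : ℝ := (p - r)^2 + 4*q^2 with hD
  have hD0 : 0 ≤ D := by positivity
  set s : ℝ := Real.sqrt D with hsdef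
  have hs0 : 0 ≤ s := Real.sqrt_nonneg D
  have hs2 : s^2 = D := Real.sq_sqrt hD0
  have hsu : s ≤ 2*μ - p - r := by
    have h1 : s^2 ≤ (2*μ - p - r)^2 := by rw [hs2]; nlinarith
    nlinarith
  have hsl : s ≤ p + r - 2*ν := by
    have h1 : s^2 ≤ (p + r - 2*ν)^2 := by rw [hs2]; nlinarith
    nlinarith
  set L : ℝ := (p + r + s)/2 with hL
  have hLν : ν ≤ L := by simp only [hL]; nlinarith
  have hLμ : L ≤ μ := by simp only [hL]; nlinarith
  have hL0 : 0 < L := lt_of_lt_of_le hν hLν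
  refine ⟨L⁻¹, ⟨inv_anti₀ hL0 hLμ, inv_anti₀ hν hLν⟩, ?_⟩
  set a : ℝ := L⁻¹ with ha
  have haL : a * L = 1 := inv_mul_cancel₀ (ne_of_gt hL0)
  have ha0 : 0 < a := inv_pos.mpr hL0
  set α : ℝ := 1 - a*p with hα
  set β : ℝ := -(a*q) with hβ
  set γ : ℝ := 1 - a*r with hγ
  have hs2' : s^2 = (p - r)^2 + 4*q^2 := by rw [hs2, hD]
  have haL' : a * ((p + r + s)/2) = 1 := by rw [← hL]; exact haL
  have hchar : ((p+r+s)/2)^2 - (p+r)*((p+r+s)/2) + (p*r - q^2) = 0 := by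
    linear_combination hs2' / 4
  have hdet : α * γ = β^2 := by
    rw [hα, hβ, hγ]
    linear_combination a^2 * hchar - (1 + a*((p+r+s)/2) - a*(p+r)) * haL'
  have hc : α + γ = a * s := by
    rw [hα, hγ]; linear_combination -2 * haL'
  have hc0 : 0 ≤ α + γ := by rw [hc]; positivity
  have hpr : p + r = 2*L - s := by rw [hL]; ring
  have hsLν : s ≤ L - ν := by linarith
  have hdivμ : ν/μ * μ = ν := div_mul_cancel₀ ν (ne_of_gt hμ)
  have hcle : α + γ ≤ 1 - ν/μ := by
    have e : ((1 - ν/μ) * L) * μ = L*μ - ν*L := by field_simp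
    have key2 : s * μ ≤ ((1 - ν/μ) * L) * μ := by
      rw [e]
      have h4 : ν*L ≤ ν*μ := mul_le_mul_of_nonneg_left hLμ hν.le
      have h5 : s*μ ≤ (L-ν)*μ := mul_le_mul_of_nonneg_right hsLν hμ.le
      linarith only [h4, h5]
    have h6 : s ≤ (1 - ν/μ)*L := le_of_mul_le_mul_right key2 hμ
    rw [hc, ha, inv_mul_eq_div, div_le_iff₀ hL0]
    exact h6
  intro X
  have htr : X.trace = X 0 0 + X 1 1 := by
    simp [Matrix.trace, Fin.sum_univ_two]
  have htrAX : (A * X).trace = p * X 0 0 + q * X 1 0 + q * X 0 1 + r * X 1 1 := by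
    simp [Matrix.trace, Matrix.diag, Matrix.mul_apply, Fin.sum_univ_two, hq']
    ring
  have hsum : (∑ i : Fin 2, ∑ j : Fin 2, X i j ^ 2)
      = X 0 0^2 + X 0 1^2 + X 1 0^2 + X 1 1^2 := by
    simp [Fin.sum_univ_two]; ring
  set x := X 0 0
  set y := X 0 1
  set z := X 1 0
  set w := X 1 1
  have hE : X.trace - a * (A * X).trace = α*x + β*y + β*z + γ*w := by
    rw [htr, htrAX, hα, hβ, hγ]; ring
  have h1 : α^2 + 2*β^2 + γ^2 = (α+γ)^2 := by linear_combination -2*hdet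
  have hcs : (α*x + β*y + β*z + γ*w)^2 ≤ ((α+γ)^2) * (x^2+y^2+z^2+w^2) := by
    have expand : ((α+γ)^2) * (x^2+y^2+z^2+w^2) - (α*x + β*y + β*z + γ*w)^2
        = (α*y - β*x)^2 + (α*z - β*x)^2 + (α*w - γ*x)^2 + (β*z - β*y)^2
          + (β*w - γ*y)^2 + (β*w - γ*z)^2 := by
      linear_combination 2*(x^2+y^2+z^2+w^2)*hdet
    linarith [expand, sq_nonneg (α*y - β*x), sq_nonneg (α*z - β*x), sq_nonneg (α*w - γ*x),
      sq_nonneg (β*z - β*y), sq_nonneg (β*w - γ*y), sq_nonneg (β*w - γ*z)]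
  rw [hE, hsum]
  have h2 : |α*x + β*y + β*z + γ*w| ≤ (α+γ) * Real.sqrt (x^2+y^2+z^2+w^2) := by
    rw [← Real.sqrt_sq_eq_abs]
    have h3 := Real.sqrt_le_sqrt hcs
    rwa [Real.sqrt_mul (sq_nonneg _), Real.sqrt_sq hc0] at h3
  exact h2.trans (mul_le_mul_of_nonneg_right hcle (Real.sqrt_nonneg _))
end

section
/- Let K > 1 and set α = K − √(K² − 1), so that α ∈ (0,1) and K = (1 + α²)/(2α). Let K′ ≥ 0 be a real number and let u = (u₁,u₂), v = (v₁,v₂) ∈ ℝ² be vectors satisfying |u|² + |v|² ≤ 2K(u₁v₂ − u₂v₁) + K′. Then (1 + α²)|u|² ≤ |u|² + |v|² + 2α²K′/(1 − α²). -/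
/-- The pointwise algebraic inequality underlying the quasiconformal-mapping
method: if `|u|² + |v|² ≤ 2K(u₁v₂ − u₂v₁) + K'` with `K > 1`, `K' ≥ 0`, and
`α = K − √(K² − 1)`, then `(1 + α²)|u|² ≤ |u|² + |v|² + 2α²K'/(1 − α²)`. -/
theorem quasiconformal_pointwise_ineq (K α K' u₁ u₂ v₁ v₂ : ℝ)
    (hK : 1 < K) (hα : α = K - Real.sqrt (K ^ 2 - 1)) (hK' : 0 ≤ K')
    (h : (u₁ ^ 2 + u₂ ^ 2) + (v₁ ^ 2 + v₂ ^ 2) ≤ 2 * K * (u₁ * v₂ - u₂ * v₁) + K') :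
    (1 + α ^ 2) * (u₁ ^ 2 + u₂ ^ 2)
      ≤ (u₁ ^ 2 + u₂ ^ 2) + (v₁ ^ 2 + v₂ ^ 2) + 2 * α ^ 2 * K' / (1 - α ^ 2) := by
  have h1 : (0:ℝ) ≤ K ^ 2 - 1 := by nlinarith
  have hs : Real.sqrt (K ^ 2 - 1) ^ 2 = K ^ 2 - 1 := Real.sq_sqrt h1
  have hsnn : 0 ≤ Real.sqrt (K ^ 2 - 1) := Real.sqrt_nonneg _
  have hα1 : α < 1 := by
    have : K - 1 < Real.sqrt (K ^ 2 - 1) := by nlinarith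
    rw [hα]; linarith
  have hα0 : 0 < α := by
    have : Real.sqrt (K ^ 2 - 1) < K := by nlinarith
    rw [hα]; linarith
  have hKα : 2 * α * K = 1 + α ^ 2 := by rw [hα]; nlinarith
  have hE : (0:ℝ) < 1 - α ^ 2 := by nlinarith
  have h2 : (α ^ 2 * (u₁ ^ 2 + u₂ ^ 2) - (v₁ ^ 2 + v₂ ^ 2)) * (1 - α ^ 2)
      ≤ 2 * α ^ 2 * K' := by
    have hAM : 2 * α * (u₁ * v₂ - u₂ * v₁)
        ≤ α ^ 2 * (u₁ ^ 2 + u₂ ^ 2) + (v₁ ^ 2 + v₂ ^ 2) := by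
      nlinarith [sq_nonneg (α * u₁ - v₂), sq_nonneg (α * u₂ + v₁)]
    have heq : 2 * α ^ 2 * (2 * K * (u₁ * v₂ - u₂ * v₁) + K')
        = (1 + α ^ 2) * (2 * α * (u₁ * v₂ - u₂ * v₁)) + 2 * α ^ 2 * K' := by
      rw [← hKα]; ring
    have h4 := mul_le_mul_of_nonneg_left h (by positivity : (0:ℝ) ≤ 2 * α ^ 2)
    have h5 := mul_le_mul_of_nonneg_left hAM (by positivity : (0:ℝ) ≤ 1 + α ^ 2)
    nlinarith [h4, h5, heq]
  have h3 := (le_div_iff₀ hE).mpr h2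
  linarith
end

section
/- Let R > 0, k₁ ≥ 0, k₂ > 0, and let D : (0, R) → ℝ be nondecreasing and differentiable. Suppose that (D(r) − k₁)² ≤ k₂·r·D′(r) for every r ∈ (0, R) with D(r) > k₁. Then D(R/2) ≤ k₂/log 2 + k₁. -/
/-- The key calculus (differential-inequality) lemma used to bound the Dirichlet
integral on the half-radius disk: if `D` is nondecreasing and differentiable on
`(0, R)` and `(D(r) − k₁)² ≤ k₂ r D′(r)` whenever `D(r) > k₁`, then
`D(R/2) ≤ k₂ / log 2 + k₁`. -/
theorem dirichlet_differential_inequality (R k₁ k₂ : ℝ) (D : ℝ → ℝ)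
    (hR : 0 < R) (hk₁ : 0 ≤ k₁) (hk₂ : 0 < k₂)
    (hmono : MonotoneOn D (Set.Ioo 0 R))
    (hdiff : ∀ r ∈ Set.Ioo 0 R, DifferentiableAt ℝ D r)
    (h : ∀ r ∈ Set.Ioo 0 R, k₁ < D r → (D r - k₁) ^ 2 ≤ k₂ * r * deriv D r) :
    D (R / 2) ≤ k₂ / Real.log 2 + k₁ := by
  by_contra hc
  push_neg at hc
  have hlog2 : (0:ℝ) < Real.log 2 := Real.log_pos (by norm_num)
  set d : ℝ := D (R / 2) - k₁ with hd_def
  have hd_gt : k₂ / Real.log 2 < d := by simp [hd_def]; linarith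
  have hd_pos : 0 < d := lt_trans (div_pos hk₂ hlog2) hd_gt
  set c : ℝ := k₂ / d with hc_def
  have hc_pos : 0 < c := div_pos hk₂ hd_pos
  have hc_lt : c < Real.log 2 := by
    rw [hc_def, div_lt_iff₀ hd_pos, mul_comm]
    exact (div_lt_iff₀ hlog2).mp hd_gt
  set r₀ : ℝ := (R / 2) * Real.exp c with hr0_def
  have hR2pos : (0:ℝ) < R / 2 := by linarith
  have hR2mem : R / 2 ∈ Set.Ioo 0 R := ⟨hR2pos, by linarith⟩
  have hr0_gt : R / 2 < r₀ := by
    rw [hr0_def]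
    nlinarith [Real.add_one_le_exp c]
  have hexp_lt : Real.exp c < 2 := by
    calc Real.exp c < Real.exp (Real.log 2) := Real.exp_lt_exp.mpr hc_lt
    _ = 2 := Real.exp_log (by norm_num)
  have hr0_lt : r₀ < R := by
    rw [hr0_def]; nlinarith
  have hr0_mem : r₀ ∈ Set.Ioo 0 R := ⟨lt_trans hR2pos hr0_gt, hr0_lt⟩
  -- points in Icc (R/2) r₀ are in Ioo 0 R and D x - k₁ ≥ d
  have hsub : Set.Icc (R/2) r₀ ⊆ Set.Ioo 0 R := fun x hx =>
    ⟨lt_of_lt_of_le hR2pos hx.1, lt_of_le_of_lt hx.2 hr0_lt⟩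
  have hDge : ∀ x ∈ Set.Icc (R/2) r₀, d ≤ D x - k₁ := by
    intro x hx
    have := hmono hR2mem (hsub hx) hx.1
    simp [hd_def]; linarith
  set f : ℝ → ℝ := fun r => Real.log r + k₂ * (D r - k₁)⁻¹ with hf_def
  have hderiv : ∀ x ∈ Set.Icc (R/2) r₀,
      HasDerivAt f (x⁻¹ + k₂ * (-(deriv D x) / (D x - k₁)^2)) x := by
    intro x hx
    have hxm := hsub hx
    have hxpos : 0 < x := hxm.1
    have hne : D x - k₁ ≠ 0 := ne_of_gt (lt_of_lt_of_le hd_pos (hDge x hx))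
    have h1 : HasDerivAt (fun r => D r - k₁) (deriv D x) x :=
      ((hdiff x hxm).hasDerivAt).sub_const k₁
    have h2 := (h1.inv hne).const_mul k₂
    exact (Real.hasDerivAt_log (ne_of_gt hxpos)).add h2
  have hcont : ContinuousOn f (Set.Icc (R/2) r₀) := fun x hx =>
    ((hderiv x hx).differentiableAt.continuousAt).continuousWithinAt
  have hanti : AntitoneOn f (Set.Icc (R/2) r₀) := by
    apply antitoneOn_of_deriv_nonpos (convex_Icc _ _) hcont
    · intro x hx
      rw [interior_Icc] at hx
      exact ((hderiv x ⟨le_of_lt hx.1, le_of_lt hx.2⟩).differentiableAt).differentiableWithinAt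
    intro x hx
    rw [interior_Icc] at hx
    have hx' : x ∈ Set.Icc (R/2) r₀ := ⟨le_of_lt hx.1, le_of_lt hx.2⟩
    have hxm := hsub hx'
    have hxpos : 0 < x := hxm.1
    have hA : d ≤ D x - k₁ := hDge x hx'
    have hApos : 0 < D x - k₁ := lt_of_lt_of_le hd_pos hA
    have hineq := h x hxm (by linarith)
    rw [(hderiv x hx').deriv]
    have hkey : x⁻¹ ≤ k₂ * deriv D x / (D x - k₁)^2 := by
      rw [inv_eq_one_div, div_le_div_iff₀ hxpos (by positivity)]
      nlinarith
    have : k₂ * (-(deriv D x) / (D x - k₁)^2) = -(k₂ * deriv D x / (D x - k₁)^2) := by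
      ring
    rw [this]; linarith
  have hle : f r₀ ≤ f (R/2) :=
    hanti (Set.left_mem_Icc.mpr (le_of_lt hr0_gt))
      (Set.right_mem_Icc.mpr (le_of_lt hr0_gt)) (le_of_lt hr0_gt)
  have hlogr0 : Real.log r₀ = Real.log (R/2) + c := by
    rw [hr0_def, Real.log_mul (ne_of_gt hR2pos) (Real.exp_ne_zero c), Real.log_exp]
  have hfR2 : f (R/2) = Real.log (R/2) + c := by
    simp only [hf_def, ← hd_def, hc_def]
    ring
  have hpos : 0 < k₂ * (D r₀ - k₁)⁻¹ := by
    have : 0 < D r₀ - k₁ :=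
      lt_of_lt_of_le hd_pos (hDge r₀ (Set.right_mem_Icc.mpr (le_of_lt hr0_gt)))
    positivity
  rw [hfR2] at hle
  simp only [hf_def, hlogr0] at hle
  linarith
end

section
/- For every r ∈ [r₋, ∞), every θ ∈ (0, π/2), and all λ₁, λ₂ with sin²θ < λ₁ < λ₂ < 1, one has G(λ₁; r, θ) − G(λ₂; r, θ) ≥ ((3π − 4)/(24a))·(λ₂ − λ₁). In particular, λ ↦ G(λ; r, θ) is strictly decreasing on (sin²θ, 1). -/
open Real MeasureTheory intervalIntegral Set

set_option maxHeartbeats 1000000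

lemma aux_inv_sqrt_sub_le {p q : ℝ} (hq : 0 < q) (hpq : q ≤ p) :
    1 / Real.sqrt q - 1 / Real.sqrt p ≤ (p - q) / (2 * q * Real.sqrt q) := by
  have hp : 0 < p := lt_of_lt_of_le hq hpq
  have hsq : 0 < Real.sqrt q := Real.sqrt_pos.2 hq
  have hsp : 0 < Real.sqrt p := Real.sqrt_pos.2 hp
  have hle : Real.sqrt q ≤ Real.sqrt p := Real.sqrt_le_sqrt hpq
  have hq2 : Real.sqrt q ^ 2 = q := Real.sq_sqrt hq.le
  have hp2 : Real.sqrt p ^ 2 = p := Real.sq_sqrt hp.le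
  rw [div_sub_div _ _ (ne_of_gt hsq) (ne_of_gt hsp),
    div_le_div_iff₀ (by positivity) (by positivity)]
  nlinarith [mul_nonneg (sub_nonneg.2 hle) hsq.le, mul_pos hsq hsp,
    mul_nonneg (mul_nonneg (sub_nonneg.2 hle) hsq.le) hsq.le,
    mul_nonneg (mul_nonneg (sub_nonneg.2 hle) hsq.le) hsp.le,
    mul_nonneg (mul_nonneg (mul_nonneg (sub_nonneg.2 hle) hsq.le) hsp.le) hsp.le]

lemma aux_le_inv_sqrt_sub {p q : ℝ} (hq : 0 < q) (hpq : q ≤ p) :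
    (p - q) / (2 * p * Real.sqrt p) ≤ 1 / Real.sqrt q - 1 / Real.sqrt p := by
  have hp : 0 < p := lt_of_lt_of_le hq hpq
  have hsq : 0 < Real.sqrt q := Real.sqrt_pos.2 hq
  have hsp : 0 < Real.sqrt p := Real.sqrt_pos.2 hp
  have hle : Real.sqrt q ≤ Real.sqrt p := Real.sqrt_le_sqrt hpq
  have hq2 : Real.sqrt q ^ 2 = q := Real.sq_sqrt hq.le
  have hp2 : Real.sqrt p ^ 2 = p := Real.sq_sqrt hp.le
  rw [div_sub_div _ _ (ne_of_gt hsq) (ne_of_gt hsp),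
    div_le_div_iff₀ (by positivity) (by positivity)]
  nlinarith [mul_nonneg (mul_nonneg hsp.le (sq_nonneg (Real.sqrt p - Real.sqrt q)))
    (by linarith : (0:ℝ) ≤ 2 * Real.sqrt p + Real.sqrt q)]

lemma aux_rpow_neg_half (x : ℝ) (hx : 0 ≤ x) : x ^ (-(1/2) : ℝ) = 1 / Real.sqrt x := by
  rw [Real.rpow_neg hx, Real.sqrt_eq_rpow, one_div]
  norm_num

lemma aux_ref_integrable :
    IntervalIntegrable (fun x : ℝ => (1 - x) ^ (-(1/2) : ℝ)) volume 0 1 := by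
  have h := (intervalIntegrable_rpow' (r := -(1/2)) (by norm_num)
    (a := (0:ℝ)) (b := (1:ℝ))).comp_sub_left 1
  simpa using h.symm

lemma aux_integrable_of_bound (f : ℝ → ℝ) (c : ℝ) (hm : Measurable f)
    (hb : ∀ x ∈ Set.Ioc (0:ℝ) 1, |f x| ≤ c * (1 - x) ^ (-(1/2) : ℝ)) (hc : 0 ≤ c) :
    IntervalIntegrable f volume 0 1 := by
  apply IntervalIntegrable.mono_fun' (aux_ref_integrable.const_mul c)
    hm.aestronglyMeasurable.restrict
  rw [Set.uIoc_of_le (zero_le_one (α := ℝ))]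
  refine MeasureTheory.ae_restrict_of_forall_mem measurableSet_Ioc fun x hx => ?_
  simpa [Real.norm_eq_abs] using hb x hx

lemma aux_intSq : IntervalIntegrable (fun x : ℝ => x^2 / Real.sqrt (1 - x^2)) volume 0 1 := by
  apply aux_integrable_of_bound _ 1
    (((measurable_id.pow_const 2).div ((measurable_const.sub
      (measurable_id.pow_const 2)).sqrt)))
  · intro x hx
    rcases eq_or_lt_of_le hx.2 with h1 | h1
    · subst h1
      norm_num [Real.zero_rpow (show (-(1/2):ℝ) ≠ 0 by norm_num)]
    · have hu : 0 < 1 - x^2 := by nlinarith [hx.1]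
      have hux : 0 < 1 - x := by linarith
      show |x^2 / Real.sqrt (1 - x^2)| ≤ 1 * (1 - x) ^ (-(1/2) : ℝ)
      rw [aux_rpow_neg_half _ hux.le, one_mul, abs_of_nonneg (a := x^2 / Real.sqrt (1 - x^2)) (by positivity)]
      have hs : Real.sqrt (1 - x) ≤ Real.sqrt (1 - x^2) := by
        apply Real.sqrt_le_sqrt; nlinarith [hx.1]
      have hs0 : 0 < Real.sqrt (1 - x) := Real.sqrt_pos.2 hux
      calc x^2 / Real.sqrt (1 - x^2) ≤ 1 / Real.sqrt (1 - x^2) := by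
            gcongr
            nlinarith [hx.1]
        _ ≤ 1 / Real.sqrt (1 - x) := by gcongr
  · norm_num

lemma aux_intB {lam : ℝ} (h0 : 0 ≤ lam) (h1 : lam < 1) :
    IntervalIntegrable (fun x : ℝ => 1 / Real.sqrt ((1 - x^2) * (1 - lam * x^2)))
      volume 0 1 := by
  apply aux_integrable_of_bound _ (1 / Real.sqrt (1 - lam))
    ((measurable_const.div (((measurable_const.sub (measurable_id.pow_const 2)).mul
      (measurable_const.sub (measurable_const.mul (measurable_id.pow_const 2)))).sqrt)))
  · intro x hx
    rcases eq_or_lt_of_le hx.2 with hx1 | hx1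
    · subst hx1
      norm_num [Real.zero_rpow (show (-(1/2):ℝ) ≠ 0 by norm_num)]
    · have hu : 0 < 1 - x^2 := by nlinarith [hx.1]
      have hux : 0 < 1 - x := by linarith
      have hv : 0 < 1 - lam := by linarith
      show |1 / Real.sqrt ((1 - x^2) * (1 - lam * x^2))| ≤ 1 / Real.sqrt (1 - lam) * (1 - x) ^ (-(1/2) : ℝ)
      rw [aux_rpow_neg_half _ hux.le, abs_of_nonneg (a := 1 / Real.sqrt ((1 - x^2) * (1 - lam * x^2))) (by positivity)]
      have key : Real.sqrt (1 - lam) * Real.sqrt (1 - x)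
          ≤ Real.sqrt ((1 - x^2) * (1 - lam * x^2)) := by
        rw [← Real.sqrt_mul hv.le]
        apply Real.sqrt_le_sqrt
        have e1 : 1 - x ≤ 1 - x^2 := by
          nlinarith [mul_nonneg hx.1.le (sub_nonneg.2 hx1.le)]
        have e2 : 1 - lam ≤ 1 - lam * x^2 := by nlinarith [mul_nonneg h0 hu.le]
        rw [mul_comm (1 - x^2)]
        exact mul_le_mul e2 e1 hux.le (by linarith)
      have hpos : 0 < Real.sqrt (1 - lam) * Real.sqrt (1 - x) := by positivity
      calc 1 / Real.sqrt ((1 - x^2) * (1 - lam * x^2))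
          ≤ 1 / (Real.sqrt (1 - lam) * Real.sqrt (1 - x)) := by gcongr
        _ = 1 / Real.sqrt (1 - lam) * (1 / Real.sqrt (1 - x)) := by ring
  · positivity

lemma aux_integral_sq_div_sqrt :
    ∫ x in (0:ℝ)..1, x^2 / Real.sqrt (1 - x^2) = Real.pi / 4 := by
  have hFTC := intervalIntegral.integral_eq_sub_of_hasDeriv_right_of_le
    (f := fun x : ℝ => (Real.arcsin x - x * Real.sqrt (1 - x^2)) / 2)
    (f' := fun x : ℝ => x^2 / Real.sqrt (1 - x^2))
    (zero_le_one)
    (by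
      apply Continuous.continuousOn
      exact (Real.continuous_arcsin.sub (continuous_id.mul
        (Real.continuous_sqrt.comp (by continuity)))).div_const 2)
    (fun x hx => by
      have hu : 0 < 1 - x^2 := by nlinarith [hx.1, hx.2]
      have hsu : 0 < Real.sqrt (1 - x^2) := Real.sqrt_pos.2 hu
      have hd1 : HasDerivAt Real.arcsin (1 / Real.sqrt (1 - x^2)) x :=
        Real.hasDerivAt_arcsin (by nlinarith [hx.1]) (by nlinarith [hx.2])
      have hd2 : HasDerivAt (fun y : ℝ => 1 - y^2) (-(2*x)) x := by
        simpa using ((hasDerivAt_pow 2 x).const_sub 1)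
      have hd3 : HasDerivAt (fun y : ℝ => Real.sqrt (1 - y^2))
          (1 / (2 * Real.sqrt (1 - x^2)) * (-(2*x))) x :=
        (Real.hasDerivAt_sqrt hu.ne').comp x hd2
      have hd4 : HasDerivAt (fun y : ℝ => (Real.arcsin y - y * Real.sqrt (1 - y^2)) / 2)
          ((1 / Real.sqrt (1 - x^2) -
            (1 * Real.sqrt (1 - x^2) + x * (1 / (2 * Real.sqrt (1 - x^2)) * (-(2*x))))) / 2) x :=
        ((hd1.sub ((hasDerivAt_id x).mul hd3)).div_const 2)
      have heq : (1 / Real.sqrt (1 - x^2) -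
            (1 * Real.sqrt (1 - x^2) + x * (1 / (2 * Real.sqrt (1 - x^2)) * (-(2*x))))) / 2
          = x^2 / Real.sqrt (1 - x^2) := by
        have h2 : Real.sqrt (1 - x^2) * Real.sqrt (1 - x^2) = 1 - x^2 :=
          Real.mul_self_sqrt hu.le
        field_simp
        nlinarith [h2]
      rw [heq] at hd4
      exact hd4.hasDerivWithinAt)
    aux_intSq
  rw [hFTC]
  norm_num [Real.arcsin_one]
  ring

lemma aux_B_est {lam₁ lam₂ : ℝ} (h0 : 0 < lam₁) (h12 : lam₁ < lam₂) (h2 : lam₂ < 1) :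
    (∫ x in (0:ℝ)..1, 1 / Real.sqrt ((1 - x^2) * (1 - lam₁ * x^2)))
      + (lam₂ - lam₁) * (Real.pi / 8)
      ≤ ∫ x in (0:ℝ)..1, 1 / Real.sqrt ((1 - x^2) * (1 - lam₂ * x^2)) := by
  have hi1 := aux_intB h0.le (h12.trans h2)
  have hi2 := aux_intB (h0.trans h12).le h2
  have hptwise : ∀ x ∈ Set.Icc (0:ℝ) 1,
      (lam₂ - lam₁) / 2 * (x^2 / Real.sqrt (1 - x^2))
        ≤ 1 / Real.sqrt ((1 - x^2) * (1 - lam₂ * x^2))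
          - 1 / Real.sqrt ((1 - x^2) * (1 - lam₁ * x^2)) := by
    intro x hx
    rcases eq_or_lt_of_le hx.2 with hx1 | hx1
    · subst hx1
      norm_num
    · have hu : 0 < 1 - x^2 := by nlinarith [hx.1]
      have hx2 : x^2 ≤ 1 := by nlinarith [hx.1]
      have hv2 : 0 < 1 - lam₂ * x^2 := by
        nlinarith [mul_le_of_le_one_right (h0.trans h12).le hx2]
      have hv1 : 0 < 1 - lam₁ * x^2 := by
        nlinarith [mul_le_of_le_one_right h0.le hx2]
      have hq : 0 < (1 - x^2) * (1 - lam₂ * x^2) := mul_pos hu hv2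
      have hqp : (1 - x^2) * (1 - lam₂ * x^2) ≤ (1 - x^2) * (1 - lam₁ * x^2) := by
        apply mul_le_mul_of_nonneg_left _ hu.le
        nlinarith [mul_nonneg (sub_nonneg.2 h12.le) (sq_nonneg x)]
      have key := aux_le_inv_sqrt_sub hq hqp
      set p := (1 - x^2) * (1 - lam₁ * x^2) with hp_def
      have hpu : p ≤ 1 - x^2 := by
        have : 1 - lam₁ * x^2 ≤ 1 := by nlinarith [mul_nonneg h0.le (sq_nonneg x)]
        nlinarith [hu.le]
      have hp : 0 < p := lt_of_lt_of_le hq hqp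
      have hnum : p - (1 - x^2) * (1 - lam₂ * x^2) = (1 - x^2) * ((lam₂ - lam₁) * x^2) := by
        rw [hp_def]; ring
      have hchain : (lam₂ - lam₁) / 2 * (x^2 / Real.sqrt (1 - x^2))
          ≤ (p - (1 - x^2) * (1 - lam₂ * x^2)) / (2 * p * Real.sqrt p) := by
        rw [hnum]
        have hsu : 0 < Real.sqrt (1 - x^2) := Real.sqrt_pos.2 hu
        have hsp : 0 < Real.sqrt p := Real.sqrt_pos.2 hp
        have hmono : p * Real.sqrt p ≤ (1 - x^2) * Real.sqrt (1 - x^2) :=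
          mul_le_mul hpu (Real.sqrt_le_sqrt hpu) hsp.le hu.le
        have step1 : (lam₂ - lam₁) / 2 * (x^2 / Real.sqrt (1 - x^2))
            = ((1 - x^2) * ((lam₂ - lam₁) * x^2)) / (2 * ((1 - x^2) * Real.sqrt (1 - x^2))) := by
          rw [show (lam₂ - lam₁) / 2 * (x^2 / Real.sqrt (1 - x^2))
            = ((lam₂ - lam₁) * x^2) / (2 * Real.sqrt (1 - x^2)) by ring,
            div_eq_div_iff (by positivity) (by positivity)]
          ring
        rw [step1]
        exact div_le_div_of_nonneg_left (by nlinarith [sq_nonneg x])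
          (by positivity) (by nlinarith [hmono])
      exact le_trans hchain key
  have hmono := intervalIntegral.integral_mono_on zero_le_one
    (aux_intSq.const_mul ((lam₂ - lam₁) / 2)) (hi2.sub hi1) hptwise
  rw [intervalIntegral.integral_const_mul, aux_integral_sq_div_sqrt,
    intervalIntegral.integral_sub hi2 hi1] at hmono
  have : (lam₂ - lam₁) / 2 * (Real.pi / 4) = (lam₂ - lam₁) * (Real.pi / 8) := by ring
  linarith

lemma aux_A_est {θ lam₁ lam₂ : ℝ} (hθ1 : 0 < θ) (hθ2 : θ < Real.pi / 2)
    (h1 : Real.sin θ ^ 2 < lam₁) (h12 : lam₁ < lam₂) :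
    ∫ x in (0:ℝ)..θ, 1 / Real.sqrt (lam₂ - Real.sin x ^ 2)
      ≤ ∫ x in (0:ℝ)..θ, 1 / Real.sqrt (lam₁ - Real.sin x ^ 2) := by
  have hsin : ∀ x ∈ Set.Icc (0:ℝ) θ, Real.sin x ^ 2 ≤ Real.sin θ ^ 2 := by
    intro x hx
    have hx1 : x ∈ Set.Icc (-(Real.pi/2)) (Real.pi/2) := by
      constructor <;> [linarith [hx.1, Real.pi_pos]; linarith [hx.2]]
    have hθ1' : θ ∈ Set.Icc (-(Real.pi/2)) (Real.pi/2) := by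
      constructor <;> [linarith [Real.pi_pos]; linarith]
    have hmono := Real.strictMonoOn_sin.monotoneOn hx1 hθ1' hx.2
    have hnn : 0 ≤ Real.sin x := Real.sin_nonneg_of_nonneg_of_le_pi hx.1
      (by linarith [hx.2, Real.pi_pos])
    exact pow_le_pow_left₀ hnn hmono 2
  have hpos : ∀ lam, Real.sin θ ^ 2 < lam → ∀ x ∈ Set.Icc (0:ℝ) θ,
      0 < lam - Real.sin x ^ 2 := fun lam hlam x hx => by
    have := hsin x hx; linarith
  have hcont : ∀ lam, Real.sin θ ^ 2 < lam →
      ContinuousOn (fun x => 1 / Real.sqrt (lam - Real.sin x ^ 2)) (Set.Icc (0:ℝ) θ) := by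
    intro lam hlam
    apply ContinuousOn.div continuousOn_const
    · exact (Real.continuous_sqrt.comp (by continuity)).continuousOn
    · intro x hx
      exact ne_of_gt (Real.sqrt_pos.2 (hpos lam hlam x hx))
  have hint : ∀ lam, Real.sin θ ^ 2 < lam →
      IntervalIntegrable (fun x => 1 / Real.sqrt (lam - Real.sin x ^ 2)) volume 0 θ := by
    intro lam hlam
    apply ContinuousOn.intervalIntegrable
    rw [Set.uIcc_of_le hθ1.le]
    exact hcont lam hlam
  apply intervalIntegral.integral_mono_on hθ1.le (hint _ (h1.trans h12)) (hint _ h1)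
  intro x hx
  have h1x := hpos _ h1 x hx
  apply one_div_le_one_div_of_le (Real.sqrt_pos.2 h1x)
  apply Real.sqrt_le_sqrt
  linarith

/-- `r₊ = m + √(m² − a²)` -/
noncomputable def rPlus (a m : ℝ) : ℝ := m + Real.sqrt (m ^ 2 - a ^ 2)

/-- `r₋ = m − √(m² − a²)` -/
noncomputable def rMinus (a m : ℝ) : ℝ := m - Real.sqrt (m ^ 2 - a ^ 2)

/-- `Σ(r, λ) = √((r² + a²)² − a²λΔ(r))` with `Δ(r) = r² − 2mr + a²` -/
noncomputable def Sig (a m r lam : ℝ) : ℝ :=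
  Real.sqrt ((r ^ 2 + a ^ 2) ^ 2 - a ^ 2 * lam * (r ^ 2 - 2 * m * r + a ^ 2))

/-- `G(λ; r, θ) = (1/a)∫₀^{θ} dθ′/√(λ − sin²θ′)
  − (1/a)∫₀^{1} dx/√((1 − x²)(1 − λx²)) + sgn(r − r₊)·∫_{r₊}^{r} dr′/Σ(r′, λ)` -/
noncomputable def Gker (a m lam r θ : ℝ) : ℝ :=
  (1 / a) * (∫ θ' in (0:ℝ)..θ, 1 / Real.sqrt (lam - Real.sin θ' ^ 2))
    - (1 / a) * (∫ x in (0:ℝ)..(1:ℝ), 1 / Real.sqrt ((1 - x ^ 2) * (1 - lam * x ^ 2)))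
    + Real.sign (r - rPlus a m) * ∫ r' in (rPlus a m)..r, 1 / Sig a m r' lam


lemma aux_C_est (a m : ℝ) (ha : 0 < a) (ham : a < m) (r : ℝ) (hr : rMinus a m ≤ r)
    {lam₁ lam₂ : ℝ} (h0 : 0 < lam₁) (h12 : lam₁ < lam₂) (h2 : lam₂ < 1) :
    Real.sign (r - rPlus a m) * (∫ r' in (rPlus a m)..r, 1 / Sig a m r' lam₂)
      - Real.sign (r - rPlus a m) * (∫ r' in (rPlus a m)..r, 1 / Sig a m r' lam₁)
      ≤ (lam₂ - lam₁) / (6 * a) := by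
  have hm : 0 < m := ha.trans ham
  have hs0 : 0 ≤ Real.sqrt (m^2 - a^2) := Real.sqrt_nonneg _
  have hsq : Real.sqrt (m^2 - a^2) ^ 2 = m^2 - a^2 := Real.sq_sqrt (by nlinarith)
  have hrPa : a < rPlus a m := by unfold rPlus; linarith
  have hrM0 : 0 < rMinus a m := by
    unfold rMinus
    have h : Real.sqrt (m^2 - a^2) < m := (Real.sqrt_lt' hm).2 (by nlinarith)
    linarith
  have hrMP : rMinus a m ≤ rPlus a m := by unfold rPlus rMinus; linarith
  have hΔfac : ∀ r' : ℝ, r'^2 - 2*m*r' + a^2 = (r' - rPlus a m) * (r' - rMinus a m) := by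
    intro r'
    unfold rPlus rMinus
    linear_combination hsq
  have hQpos : ∀ lam, 0 ≤ lam → lam ≤ 1 → ∀ r', rMinus a m ≤ r' →
      0 < (r'^2 + a^2)^2 - a^2 * lam * (r'^2 - 2*m*r' + a^2) := by
    intro lam hl0 hl1 r' hr'
    have hr'0 : 0 < r' := lt_of_lt_of_le hrM0 hr'
    rcases le_or_gt (r'^2 - 2*m*r' + a^2) 0 with hD | hD
    · have hD' : a^2 * lam * (r'^2 - 2*m*r' + a^2) ≤ 0 :=
        mul_nonpos_of_nonneg_of_nonpos (by positivity) hD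
      nlinarith [pow_pos ha 2, sq_nonneg r', mul_nonneg (sq_nonneg r') (sq_nonneg a)]
    · have hb : a^2 * lam * (r'^2 - 2*m*r' + a^2) ≤ a^2 * 1 * (r'^2 - 2*m*r' + a^2) := by
        apply mul_le_mul_of_nonneg_right _ hD.le
        nlinarith [sq_nonneg a]
      nlinarith [mul_pos (mul_pos (pow_pos ha 2) hm) hr'0, sq_nonneg (r'^2),
        mul_nonneg (sq_nonneg a) (sq_nonneg r')]
  have hint : ∀ lam, 0 ≤ lam → lam ≤ 1 → ∀ c d : ℝ, rMinus a m ≤ c → rMinus a m ≤ d →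
      IntervalIntegrable (fun r' => 1 / Sig a m r' lam) volume c d := by
    intro lam h0' h1' c d hc hd
    apply ContinuousOn.intervalIntegrable
    apply ContinuousOn.div continuousOn_const
    · apply Continuous.continuousOn
      unfold Sig
      exact Real.continuous_sqrt.comp (by continuity)
    · intro x hx
      have hx' : rMinus a m ≤ x := le_trans (le_min hc hd) hx.1
      unfold Sig
      exact ne_of_gt (Real.sqrt_pos.2 (hQpos lam h0' h1' x hx'))
  rcases lt_trichotomy r (rPlus a m) with hlt | heq | hgt
  · -- r < r₊ : sign = -1
    rw [Real.sign_of_neg (by linarith)]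
    have hpt : ∀ x ∈ Set.Icc r (rPlus a m), 1 / Sig a m x lam₂ ≤ 1 / Sig a m x lam₁ := by
      intro x hx
      have hxM : rMinus a m ≤ x := le_trans hr hx.1
      have hΔ : x^2 - 2*m*x + a^2 ≤ 0 := by
        rw [hΔfac]
        exact mul_nonpos_of_nonpos_of_nonneg (by linarith [hx.2]) (by linarith)
      have hQ1 : 0 < (x^2 + a^2)^2 - a^2*lam₁*(x^2 - 2*m*x + a^2) :=
        hQpos lam₁ h0.le (by linarith) x hxM
      unfold Sig
      apply one_div_le_one_div_of_le (Real.sqrt_pos.2 hQ1)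
      apply Real.sqrt_le_sqrt
      nlinarith [mul_nonneg (mul_nonneg (sq_nonneg a) (sub_nonneg.2 h12.le))
        (neg_nonneg.2 hΔ)]
    have hmono := intervalIntegral.integral_mono_on hlt.le
      (hint lam₂ (h0.trans h12).le h2.le r (rPlus a m) hr hrMP)
      (hint lam₁ h0.le (by linarith) r (rPlus a m) hr hrMP) hpt
    simp only [intervalIntegral.integral_symm r (rPlus a m)]
    have hrhs : 0 ≤ (lam₂ - lam₁) / (6*a) := div_nonneg (by linarith) (by linarith)
    linarith
  · subst heq
    simp only [intervalIntegral.integral_same, mul_zero, sub_zero]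
    exact div_nonneg (by linarith) (by linarith)
  · -- r > r₊ : sign = 1
    rw [Real.sign_of_pos (by linarith), one_mul, one_mul]
    have hrMr : rMinus a m ≤ r := hr
    have hint1 := hint lam₁ h0.le (by linarith) (rPlus a m) r hrMP hrMr
    have hint2 := hint lam₂ (h0.trans h12).le h2.le (rPlus a m) r hrMP hrMr
    rw [← intervalIntegral.integral_sub hint2 hint1]
    set c : ℝ := a^2 * (lam₂ - lam₁) with hc_def
    have hc0 : 0 ≤ c := mul_nonneg (sq_nonneg a) (by linarith)
    have hgpt : ∀ x ∈ Set.Icc (rPlus a m) r,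
        1 / Sig a m x lam₂ - 1 / Sig a m x lam₁ ≤ c * ((x - a) / (2 * x^5)) := by
      intro x hx
      have hxa : a < x := lt_of_lt_of_le hrPa hx.1
      have hx0 : 0 < x := ha.trans hxa
      have hxM : rMinus a m ≤ x := le_trans hrMP hx.1
      have hΔ : 0 ≤ x^2 - 2*m*x + a^2 := by
        rw [hΔfac]
        exact mul_nonneg (by linarith [hx.1]) (by linarith)
      have hΔle : x^2 - 2*m*x + a^2 ≤ (x - a) * x := by
        rw [hΔfac]
        apply mul_le_mul (by linarith [hx.1]) (by linarith) (by linarith) (by linarith)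
      set Q₂ := (x^2 + a^2)^2 - a^2*lam₂*(x^2 - 2*m*x + a^2) with hQ2_def
      set Q₁ := (x^2 + a^2)^2 - a^2*lam₁*(x^2 - 2*m*x + a^2) with hQ1_def
      have hQ2pos : 0 < Q₂ := hQpos lam₂ (h0.trans h12).le h2.le x hxM
      have hQ21 : Q₂ ≤ Q₁ := by
        rw [hQ2_def, hQ1_def]
        nlinarith [mul_nonneg (mul_nonneg (sq_nonneg a) (sub_nonneg.2 h12.le)) hΔ]
      have hQ2ge : x^4 ≤ Q₂ := by
        rw [hQ2_def]
        nlinarith [mul_nonneg (mul_nonneg (sq_nonneg a) hΔ) (sub_nonneg.2 h2.le),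
          mul_nonneg (mul_nonneg (sq_nonneg a) hm.le) hx0.le, sq_nonneg (a*x),
          mul_pos (mul_pos (pow_pos ha 2) hm) hx0]
      have key := aux_inv_sqrt_sub_le hQ2pos hQ21
      have hsx : Real.sqrt (x^4) = x^2 := by
        rw [show x^4 = (x^2)^2 by ring, Real.sqrt_sq (sq_nonneg x)]
      have hsQ2 : x^2 ≤ Real.sqrt Q₂ := by
        rw [← hsx]; exact Real.sqrt_le_sqrt hQ2ge
      have hden : 2 * x^4 * x^2 ≤ 2 * Q₂ * Real.sqrt Q₂ := by
        apply mul_le_mul (by linarith) hsQ2 (by positivity) (by positivity)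
      have step2 : (Q₁ - Q₂) / (2 * Q₂ * Real.sqrt Q₂) ≤ (Q₁ - Q₂) / (2 * x^4 * x^2) :=
        div_le_div_of_nonneg_left (by linarith) (by positivity) hden
      have hnum : Q₁ - Q₂ = c * (x^2 - 2*m*x + a^2) := by
        rw [hQ1_def, hQ2_def, hc_def]; ring
      have step3 : (Q₁ - Q₂) / (2 * x^4 * x^2) ≤ (c * ((x - a) * x)) / (2 * x^4 * x^2) := by
        apply div_le_div_of_nonneg_right _ (by positivity)
        rw [hnum]
        exact mul_le_mul_of_nonneg_left hΔle hc0
      have step4 : (c * ((x - a) * x)) / (2 * x^4 * x^2) = c * ((x - a) / (2 * x^5)) := by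
        rw [show c * ((x - a) / (2 * x^5)) = (c * (x - a)) / (2 * x^5) by ring,
          div_eq_div_iff (by positivity) (by positivity)]
        ring
      have hSig2 : Sig a m x lam₂ = Real.sqrt Q₂ := by rw [Sig, hQ2_def]
      have hSig1 : Sig a m x lam₁ = Real.sqrt Q₁ := by rw [Sig, hQ1_def]
      rw [hSig1, hSig2]
      calc 1 / Real.sqrt Q₂ - 1 / Real.sqrt Q₁
          ≤ (Q₁ - Q₂) / (2 * Q₂ * Real.sqrt Q₂) := key
        _ ≤ (Q₁ - Q₂) / (2 * x^4 * x^2) := step2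
        _ ≤ (c * ((x - a) * x)) / (2 * x^4 * x^2) := step3
        _ = c * ((x - a) / (2 * x^5)) := step4
    have hgcont : ContinuousOn (fun x : ℝ => c * ((x - a) / (2 * x^5)))
        (Set.uIcc (rPlus a m) r) := by
      rw [Set.uIcc_of_le hgt.le]
      apply ContinuousOn.mul continuousOn_const
      apply ContinuousOn.div
        ((continuous_id.sub continuous_const).continuousOn)
        ((continuous_const.mul (continuous_pow 5)).continuousOn)
      intro x hx
      have hx0 : 0 < x := lt_of_lt_of_le (ha.trans hrPa) hx.1
      exact ne_of_gt (by show (0:ℝ) < 2 * x^5; nlinarith [pow_pos hx0 5])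
    have hgint : IntervalIntegrable (fun x : ℝ => c * ((x - a) / (2 * x^5)))
        volume (rPlus a m) r := hgcont.intervalIntegrable
    have hmono := intervalIntegral.integral_mono_on hgt.le (hint2.sub hint1) hgint hgpt
    have hder : ∀ u ∈ Set.uIcc (rPlus a m) r,
        HasDerivAt (fun y : ℝ => c * (a / (8 * y^4) - 1 / (6 * y^3)))
          (c * ((u - a) / (2 * u^5))) u := by
      intro u hu
      rw [Set.uIcc_of_le hgt.le] at hu
      have hu0 : 0 < u := lt_of_lt_of_le (ha.trans hrPa) hu.1
      have h4 : HasDerivAt (fun y : ℝ => y^4) (4 * u^3) u := by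
        simpa using hasDerivAt_pow 4 u
      have h3 : HasDerivAt (fun y : ℝ => y^3) (3 * u^2) u := by
        simpa using hasDerivAt_pow 3 u
      have hi4 : HasDerivAt (fun y : ℝ => (y^4)⁻¹) (-(4*u^3) / (u^4)^2) u :=
        h4.inv (pow_ne_zero 4 hu0.ne')
      have hi3 : HasDerivAt (fun y : ℝ => (y^3)⁻¹) (-(3*u^2) / (u^3)^2) u :=
        h3.inv (pow_ne_zero 3 hu0.ne')
      have hcomb : HasDerivAt
          (fun y : ℝ => c * (a / 8 * (y^4)⁻¹ - 1 / 6 * (y^3)⁻¹))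
          (c * (a / 8 * (-(4*u^3) / (u^4)^2) - 1 / 6 * (-(3*u^2) / (u^3)^2))) u :=
        ((hi4.const_mul (a/8)).sub (hi3.const_mul (1/6))).const_mul c
      have hfun : (fun y : ℝ => c * (a / 8 * (y^4)⁻¹ - 1 / 6 * (y^3)⁻¹))
          = (fun y : ℝ => c * (a / (8 * y^4) - 1 / (6 * y^3))) := by
        funext y
        rw [mul_comm (a/8), mul_comm ((1:ℝ)/6)]
        rw [← div_div, ← div_div]
        ring
      have hval : c * (a / 8 * (-(4*u^3) / (u^4)^2) - 1 / 6 * (-(3*u^2) / (u^3)^2))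
          = c * ((u - a) / (2 * u^5)) := by
        field_simp
        ring
      rw [hfun, hval] at hcomb
      exact hcomb
    have hFTC := intervalIntegral.integral_eq_sub_of_hasDerivAt hder hgint
    rw [hFTC] at hmono
    -- final numeric bound
    have hrP_pos : 0 < rPlus a m := ha.trans hrPa
    have hra : a < r := lt_trans hrPa hgt
    have hr0 : 0 < r := ha.trans hra
    have hFr : c * (a / (8 * r^4) - 1 / (6 * r^3)) ≤ 0 := by
      apply mul_nonpos_of_nonneg_of_nonpos hc0
      rw [sub_nonpos, div_le_div_iff₀ (by positivity) (by positivity)]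
      nlinarith [pow_pos hr0 3, pow_pos hr0 4]
    have hFrP : -(c * (a / (8 * (rPlus a m)^4) - 1 / (6 * (rPlus a m)^3)))
        ≤ (lam₂ - lam₁) / (6 * a) := by
      have e1 : -(c * (a / (8 * (rPlus a m)^4) - 1 / (6 * (rPlus a m)^3)))
          ≤ c * (1 / (6 * (rPlus a m)^3)) := by
        have : 0 ≤ c * (a / (8 * (rPlus a m)^4)) := by positivity
        nlinarith [this]
      have e2 : c * (1 / (6 * (rPlus a m)^3)) ≤ c * (1 / (6 * a^3)) := by
        apply mul_le_mul_of_nonneg_left _ hc0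
        apply div_le_div_of_nonneg_left zero_le_one (by positivity)
        have := pow_le_pow_left₀ ha.le hrPa.le 3
        nlinarith [this]
      have e3 : c * (1 / (6 * a^3)) = (lam₂ - lam₁) / (6 * a) := by
        rw [hc_def]
        field_simp
      linarith
    exact le_trans hmono (by linarith)


/-- Quantitative strict monotonicity in `λ` of the function `G(λ; r, θ)`
used to define the Pretorius–Israel angle. -/
theorem Gker_strict_decrease (a m : ℝ) (ha : 0 < a) (ham : a < m)
    (r θ : ℝ) (hr : r ∈ Set.Ici (rMinus a m)) (hθ : θ ∈ Set.Ioo 0 (Real.pi / 2)) :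
    (∀ lam₁ lam₂ : ℝ, Real.sin θ ^ 2 < lam₁ → lam₁ < lam₂ → lam₂ < 1 →
      (3 * Real.pi - 4) / (24 * a) * (lam₂ - lam₁)
        ≤ Gker a m lam₁ r θ - Gker a m lam₂ r θ) ∧
    StrictAntiOn (fun lam => Gker a m lam r θ) (Set.Ioo (Real.sin θ ^ 2) 1) := by
  have hkey : ∀ lam₁ lam₂ : ℝ, Real.sin θ ^ 2 < lam₁ → lam₁ < lam₂ → lam₂ < 1 →
      (3 * Real.pi - 4) / (24 * a) * (lam₂ - lam₁)
        ≤ Gker a m lam₁ r θ - Gker a m lam₂ r θ := by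
    intro lam₁ lam₂ h1 h12 h2
    have hsθ : 0 < Real.sin θ := Real.sin_pos_of_pos_of_lt_pi hθ.1
      (lt_trans hθ.2 (by linarith [Real.pi_pos]))
    have h0 : 0 < lam₁ := lt_trans (by positivity) h1
    have hA := aux_A_est hθ.1 hθ.2 h1 h12
    have hB := aux_B_est h0 h12 h2
    have hC := aux_C_est a m ha ham r hr h0 h12 h2
    simp only [Gker]
    set A₁ := ∫ θ' in (0:ℝ)..θ, 1 / Real.sqrt (lam₁ - Real.sin θ' ^ 2)
    set A₂ := ∫ θ' in (0:ℝ)..θ, 1 / Real.sqrt (lam₂ - Real.sin θ' ^ 2)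
    set B₁ := ∫ x in (0:ℝ)..(1:ℝ), 1 / Real.sqrt ((1 - x ^ 2) * (1 - lam₁ * x ^ 2))
    set B₂ := ∫ x in (0:ℝ)..(1:ℝ), 1 / Real.sqrt ((1 - x ^ 2) * (1 - lam₂ * x ^ 2))
    set C₁ := ∫ r' in (rPlus a m)..r, 1 / Sig a m r' lam₁
    set C₂ := ∫ r' in (rPlus a m)..r, 1 / Sig a m r' lam₂
    set s := Real.sign (r - rPlus a m)
    have hAd : 0 ≤ (1/a) * (A₁ - A₂) := by
      apply mul_nonneg (by positivity)
      linarith [hA]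
    have hBd : (1/a) * ((lam₂ - lam₁) * (Real.pi / 8)) ≤ (1/a) * (B₂ - B₁) := by
      apply mul_le_mul_of_nonneg_left _ (by positivity)
      linarith [hB]
    have hCd : s * C₂ - s * C₁ ≤ (lam₂ - lam₁) / (6 * a) := hC
    have hconst : (3 * Real.pi - 4) / (24 * a) * (lam₂ - lam₁)
        = (1/a) * ((lam₂ - lam₁) * (Real.pi / 8)) - (lam₂ - lam₁) / (6 * a) := by
      field_simp
      ring
    linarith
  refine ⟨hkey, ?_⟩
  intro x hx y hy hxy
  have h := hkey x y hx.1 hxy hy.2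
  have hpos : 0 < (3 * Real.pi - 4) / (24 * a) * (y - x) := by
    apply mul_pos (div_pos (by nlinarith [Real.pi_gt_three]) (by linarith)) (by linarith)
  simp only []
  linarith
end

section
/- For all θ, θ* with 0 < θ < θ* < π/2, one has ∫_{θ}^{θ*} dθ′/√(sin²θ* − sin²θ′) ≥ log( cos θ/cos θ* + √((cos θ/cos θ*)² − 1) ). -/
open Real Set MeasureTheory intervalIntegral

/-- Lower bound for the angular integral via the substitution `x = cos θ′/cos θ*`:
`∫_{θ}^{θ*} dθ′/√(sin²θ* − sin²θ′) ≥ log(cos θ/cos θ* + √((cos θ/cos θ*)² − 1))`. -/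
theorem angular_integral_lower_bound_arcosh (θ θs : ℝ)
    (h0 : 0 < θ) (hθ : θ < θs) (hs : θs < Real.pi / 2) :
    Real.log (Real.cos θ / Real.cos θs
        + Real.sqrt ((Real.cos θ / Real.cos θs) ^ 2 - 1))
      ≤ ∫ θ' in θ..θs, 1 / Real.sqrt (Real.sin θs ^ 2 - Real.sin θ' ^ 2) := by
  have hπ := Real.pi_pos
  have hc : 0 < Real.cos θs := Real.cos_pos_of_mem_Ioo ⟨by linarith, hs⟩
  have hsθ : 0 < Real.sin θs := Real.sin_pos_of_pos_of_lt_pi (by linarith) (by linarith)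
  set c := Real.cos θs with hc_def
  set f : ℝ → ℝ := fun x => 1 / Real.sqrt (Real.sin θs ^ 2 - Real.sin x ^ 2) with hf_def
  set g : ℝ → ℝ := fun x => Real.sin x / Real.sqrt (Real.sin θs ^ 2 - Real.sin x ^ 2) with hg_def
  have hid : ∀ x : ℝ, Real.sin θs ^ 2 - Real.sin x ^ 2 = Real.cos x ^ 2 - c ^ 2 := by
    intro x
    have h1 := Real.sin_sq_add_cos_sq θs
    have h2 := Real.sin_sq_add_cos_sq x
    linarith
  have hcos_ge : ∀ x ∈ Set.Icc θ θs, c ≤ Real.cos x := fun x hx =>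
    Real.cos_le_cos_of_nonneg_of_le_pi (by linarith [hx.1]) (by linarith) hx.2
  have hcos_gt : ∀ x ∈ Set.Ico θ θs, c < Real.cos x := by
    intro x hx
    exact Real.strictAntiOn_cos ⟨by linarith [hx.1], by linarith [hx.2]⟩
      ⟨by linarith, by linarith⟩ hx.2
  have hsin_nonneg : ∀ x ∈ Set.Icc θ θs, 0 ≤ Real.sin x := fun x hx =>
    Real.sin_nonneg_of_nonneg_of_le_pi (by linarith [hx.1]) (by linarith [hx.2])
  -- MVT-type bound : sin θs - sin x ≥ c * (θs - x)
  have hmono : MonotoneOn (fun y => Real.sin y - c * y) (Set.Icc θ θs) := by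
    apply monotoneOn_of_deriv_nonneg (convex_Icc θ θs)
    · exact (Real.continuous_sin.sub (continuous_const.mul continuous_id)).continuousOn
    · intro y hy
      exact (Real.differentiable_sin.sub
        ((differentiable_id.const_mul c))).differentiableAt.differentiableWithinAt
    · intro y hy
      rw [interior_Icc] at hy
      have hd : HasDerivAt (fun y => Real.sin y - c * y) (Real.cos y - c * 1) y :=
        (Real.hasDerivAt_sin y).sub ((hasDerivAt_id y).const_mul c)
      rw [hd.deriv]
      have := hcos_ge y ⟨hy.1.le, hy.2.le⟩
      linarith
  have hkey : ∀ x ∈ Set.Icc θ θs, c * (θs - x) ≤ Real.sin θs - Real.sin x := by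
    intro x hx
    have h := hmono hx (Set.right_mem_Icc.mpr hθ.le) hx.2
    simp only at h
    nlinarith [h]
  have hsbound : ∀ x ∈ Set.Icc θ θs,
      c * Real.sin θs * (θs - x) ≤ Real.sin θs ^ 2 - Real.sin x ^ 2 := by
    intro x hx
    have h1 := hkey x hx
    have h2 := hsin_nonneg x hx
    have h3 : Real.sin x ≤ Real.sin θs := by
      nlinarith [mul_nonneg hc.le (sub_nonneg.mpr hx.2)]
    nlinarith
  set K := c * Real.sin θs with hK_def
  have hK : 0 < K := mul_pos hc hsθ
  have hM_int : IntervalIntegrable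
      (fun x => (1 / Real.sqrt K) * (θs - x) ^ (-(1/2) : ℝ)) volume θ θs := by
    have h1 : IntervalIntegrable (fun x : ℝ => x ^ (-(1/2) : ℝ)) volume 0 (θs - θ) :=
      intervalIntegral.intervalIntegrable_rpow' (by norm_num)
    have h2 := (h1.comp_sub_left θs)
    simp only [sub_zero, sub_sub_cancel] at h2
    exact (h2.symm).const_mul _
  have hfm : Measurable f := by
    apply Measurable.div measurable_const
    exact (Real.continuous_sqrt.comp (continuous_const.sub (Real.continuous_sin.pow 2))).measurable
  have hgm : Measurable g := by
    apply Measurable.div Real.continuous_sin.measurable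
    exact (Real.continuous_sqrt.comp (continuous_const.sub (Real.continuous_sin.pow 2))).measurable
  have hf_int : IntervalIntegrable f volume θ θs := by
    apply hM_int.mono_fun (hfm.aestronglyMeasurable.restrict)
    rw [Set.uIoc_of_le hθ.le]
    rw [Filter.EventuallyLE, MeasureTheory.ae_restrict_iff' measurableSet_Ioc]
    apply Filter.Eventually.of_forall
    intro x hx
    rcases eq_or_lt_of_le hx.2 with heq | hlt
    · subst heq
      simp only [hf_def, sub_self, Real.sqrt_zero, div_zero, norm_zero]
      positivity
    · have hxI : x ∈ Set.Icc θ θs := ⟨hx.1.le, hx.2⟩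
      have hs1 : K * (θs - x) ≤ Real.sin θs ^ 2 - Real.sin x ^ 2 := hsbound x hxI
      have hpos : 0 < θs - x := by linarith [hlt]
      have hrw : (θs - x) ^ (-(1/2) : ℝ) = 1 / Real.sqrt (θs - x) := by
        rw [Real.rpow_neg hpos.le, Real.sqrt_eq_rpow]
        norm_num
      rw [Real.norm_eq_abs, Real.norm_eq_abs, hrw]
      have h3 : Real.sqrt K * Real.sqrt (θs - x)
          ≤ Real.sqrt (Real.sin θs ^ 2 - Real.sin x ^ 2) := by
        rw [← Real.sqrt_mul hK.le]
        exact Real.sqrt_le_sqrt hs1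
      have h4 : 0 < Real.sqrt K * Real.sqrt (θs - x) := by positivity
      have h5 : f x ≤ 1 / (Real.sqrt K * Real.sqrt (θs - x)) := by
        simp only [hf_def]
        exact one_div_le_one_div_of_le h4 h3
      rw [abs_of_nonneg (by simp only [hf_def]; positivity),
        abs_of_nonneg (by positivity)]
      calc f x ≤ 1 / (Real.sqrt K * Real.sqrt (θs - x)) := h5
        _ = 1 / Real.sqrt K * (1 / Real.sqrt (θs - x)) := by ring
  have hg_int : IntervalIntegrable g volume θ θs := by
    apply hf_int.mono_fun (hgm.aestronglyMeasurable.restrict)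
    apply Filter.Eventually.of_forall
    intro x
    simp only [hf_def, hg_def, Real.norm_eq_abs, abs_div, abs_one]
    rcases eq_or_lt_of_le (Real.sqrt_nonneg (Real.sin θs ^ 2 - Real.sin x ^ 2)) with h | h
    · rw [← h]; simp
    · rw [abs_of_nonneg h.le]
      exact (div_le_div_iff_of_pos_right h).mpr (abs_le.mpr ⟨Real.neg_one_le_sin x, Real.sin_le_one x⟩)
  -- FTC for g with antiderivative G
  set G : ℝ → ℝ := fun x =>
    -Real.log (Real.cos x / c + Real.sqrt ((Real.cos x / c) ^ 2 - 1)) with hG_def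
  have hGcont : ContinuousOn G (Set.Icc θ θs) := by
    apply ContinuousOn.neg
    apply ContinuousOn.log
    · exact ((Real.continuous_cos.div_const c).add (Real.continuous_sqrt.comp
        (((Real.continuous_cos.div_const c).pow 2).sub continuous_const))).continuousOn
    · intro x hx
      have h1 : 1 ≤ Real.cos x / c := (one_le_div hc).mpr (hcos_ge x hx)
      have h2 := Real.sqrt_nonneg ((Real.cos x / c) ^ 2 - 1)
      linarith
  have hderiv : ∀ x ∈ Set.Ioo θ θs, HasDerivAt G (g x) x := by
    intro x hx
    have hxI : x ∈ Set.Icc θ θs := ⟨hx.1.le, hx.2.le⟩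
    have hcx : c < Real.cos x := hcos_gt x ⟨hx.1.le, hx.2⟩
    have hcx0 : 0 < Real.cos x := lt_trans hc hcx
    have hu : HasDerivAt (fun y => Real.cos y / c) (-Real.sin x / c) x :=
      (Real.hasDerivAt_cos x).div_const c
    have hq : HasDerivAt (fun y => (Real.cos y / c) ^ 2 - 1)
        (2 * (Real.cos x / c) * (-Real.sin x / c)) x := by
      have h := (hu.pow 2).sub_const 1
      refine h.congr_deriv ?_
      push_cast
      ring
    have h1lt : 1 < Real.cos x / c := (one_lt_div hc).mpr hcx
    have hqpos : 0 < (Real.cos x / c) ^ 2 - 1 := by nlinarith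
    have hA := hq.sqrt hqpos.ne'
    have hw := hu.add hA
    have hwpos : 0 < Real.cos x / c + Real.sqrt ((Real.cos x / c) ^ 2 - 1) := by
      have := Real.sqrt_nonneg ((Real.cos x / c) ^ 2 - 1)
      linarith
    have hlog := (hw.log hwpos.ne').neg
    refine (HasDerivAt.congr_deriv (f := G) hlog ?_).congr_deriv rfl
    symm
    simp only [Pi.add_apply]
    -- value equality
    have hS2 : 0 < Real.cos x ^ 2 - c ^ 2 := by nlinarith
    set S := Real.sqrt (Real.cos x ^ 2 - c ^ 2) with hS_def
    have hSpos : 0 < S := Real.sqrt_pos.mpr hS2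
    have hAe : Real.sqrt ((Real.cos x / c) ^ 2 - 1) = S / c := by
      rw [show (Real.cos x / c) ^ 2 - 1 = (Real.cos x ^ 2 - c ^ 2) / c ^ 2 by
        field_simp]
      rw [Real.sqrt_div hS2.le, Real.sqrt_sq hc.le]
    have hfe : Real.sqrt (Real.sin θs ^ 2 - Real.sin x ^ 2) = S := by
      rw [hid x]
    simp only [hg_def, hfe, hAe]
    have hden : Real.cos x / c + S / c ≠ 0 := by positivity
    field_simp
    ring
  have hFTC : ∫ x in θ..θs, g x = G θs - G θ :=
    intervalIntegral.integral_eq_sub_of_hasDerivAt_of_le hθ.le hGcont hderiv hg_int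
  have hGθs : G θs = 0 := by
    simp only [hG_def, ← hc_def, div_self hc.ne']
    norm_num
  have hGθ : G θ = -Real.log (Real.cos θ / c + Real.sqrt ((Real.cos θ / c) ^ 2 - 1)) := rfl
  have hstep : ∫ x in θ..θs, g x
      = Real.log (Real.cos θ / c + Real.sqrt ((Real.cos θ / c) ^ 2 - 1)) := by
    rw [hFTC, hGθs, hGθ]; ring
  rw [← hstep]
  apply intervalIntegral.integral_mono_on hθ.le hg_int hf_int
  intro x hx
  simp only [hf_def, hg_def]
  rcases eq_or_lt_of_le (Real.sqrt_nonneg (Real.sin θs ^ 2 - Real.sin x ^ 2)) with h | h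
  · rw [← h]; simp
  · exact (div_le_div_iff_of_pos_right h).mpr (Real.sin_le_one x)
end

section
/- For every λ ∈ [0, 1] and every r ∈ [m, ∞), one has |∫_{r}^{r₊} dr′/Σ(r′, λ)| ≤ 1/a. -/
lemma sq_le_Sig (a m r lam : ℝ) (ha : 0 < a) (hm : 0 ≤ m) (hr : 0 ≤ r)
    (hlam : lam ∈ Set.Icc (0 : ℝ) 1) :
    r ^ 2 ≤ Sig a m r lam := by
  obtain ⟨h0, h1⟩ := hlam
  have key : (r ^ 2) ^ 2 ≤ (r ^ 2 + a ^ 2) ^ 2 - a ^ 2 * lam * (r ^ 2 - 2 * m * r + a ^ 2) := by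
    have h2 : 0 ≤ a ^ 2 * r ^ 2 * (2 - lam) := by nlinarith [mul_nonneg (mul_nonneg (sq_nonneg a) (sq_nonneg r)) (by linarith : (0:ℝ) ≤ 2 - lam)]
    have h3 : 0 ≤ a ^ 2 * lam * (2 * m * r) := by positivity
    have h4 : 0 ≤ a ^ 2 * a ^ 2 * (1 - lam) := by nlinarith [sq_nonneg (a ^ 2)]
    nlinarith
  rw [show r ^ 2 = Real.sqrt ((r ^ 2) ^ 2) from (Real.sqrt_sq (by positivity)).symm]
  exact Real.sqrt_le_sqrt key

lemma integral_inv_sq_bound (a m c d : ℝ) (ha : 0 < a) (ham : a < m) (hc : m ≤ c)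
    (hcd : c ≤ d) : ∫ x in c..d, (x : ℝ) ^ (-2 : ℤ) ≤ 1 / a := by
  have hm : 0 < m := ha.trans ham
  have h0 : (0 : ℝ) ∉ Set.uIcc c d := by
    rw [Set.uIcc_of_le hcd]
    intro h
    linarith [h.1]
  rw [integral_zpow (Or.inr ⟨by decide, h0⟩)]
  have hcpos : 0 < c := hm.trans_le hc
  have hdpos : 0 < d := hcpos.trans_le hcd
  have h1 : ((-2 : ℤ) + 1 : ℝ) = -1 := by norm_num
  have : (d ^ ((-2 : ℤ) + 1) - c ^ ((-2 : ℤ) + 1) : ℝ) / (((-2 : ℤ) + 1) : ℝ)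
      = c⁻¹ - d⁻¹ := by
    norm_num [zpow_neg]
    ring
  rw [this]
  have : c⁻¹ ≤ a⁻¹ := by
    apply inv_anti₀ ha (le_trans ham.le hc)
  have hd : 0 ≤ d⁻¹ := by positivity
  rw [one_div]
  linarith

/-- Uniform bound on the radial integral:
`|∫_{r}^{r₊} dr′/Σ(r′, λ)| ≤ 1/a` for `λ ∈ [0,1]` and `r ≥ m`. -/
theorem radial_integral_bound (a m : ℝ) (ha : 0 < a) (ham : a < m)
    (lam : ℝ) (hlam : lam ∈ Set.Icc (0 : ℝ) 1) (r : ℝ) (hr : r ∈ Set.Ici m) :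
    |∫ r' in r..(rPlus a m), 1 / Sig a m r' lam| ≤ 1 / a := by
  have hm : 0 < m := ha.trans ham
  set b := rPlus a m with hbdef
  have hb : m ≤ b := le_add_of_nonneg_right (Real.sqrt_nonneg _)
  have hrm : m ≤ r := hr
  have hSigpos : ∀ x : ℝ, m ≤ x → 0 < Sig a m x lam := by
    intro x hx
    have hx0 : 0 < x := hm.trans_le hx
    exact lt_of_lt_of_le (by positivity) (sq_le_Sig a m x lam ha hm.le hx0.le hlam)
  have hcontSig : Continuous (fun x : ℝ => Sig a m x lam) := by
    unfold Sig
    exact Real.continuous_sqrt.comp (by continuity)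
  -- pointwise bound and integrability on any interval within [m, ∞)
  have hptwise : ∀ x : ℝ, m ≤ x → 1 / Sig a m x lam ≤ (x : ℝ) ^ (-2 : ℤ) := by
    intro x hx
    have hx0 : 0 < x := hm.trans_le hx
    rw [zpow_neg, ← one_div]
    norm_num
    exact inv_anti₀ (by positivity) (sq_le_Sig a m x lam ha hm.le hx0.le hlam)
  have hIntf : ∀ c d : ℝ, m ≤ c → m ≤ d →
      IntervalIntegrable (fun x => 1 / Sig a m x lam) MeasureTheory.volume c d := by
    intro c d hc hd
    apply ContinuousOn.intervalIntegrable
    apply ContinuousOn.div continuousOn_const hcontSig.continuousOn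
    intro x hx
    have : m ≤ x := le_trans (le_min hc hd) hx.1
    exact (hSigpos x this).ne'
  have hIntg : ∀ c d : ℝ, m ≤ c → m ≤ d →
      IntervalIntegrable (fun x : ℝ => x ^ (-2 : ℤ)) MeasureTheory.volume c d := by
    intro c d hc hd
    apply ContinuousOn.intervalIntegrable
    apply ContinuousOn.zpow₀ continuousOn_id
    intro x hx
    left
    have : m ≤ x := le_trans (le_min hc hd) hx.1
    exact (hm.trans_le this).ne'
  have hnonneg : ∀ x : ℝ, 0 ≤ 1 / Sig a m x lam := by
    intro x
    unfold Sig
    positivity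
  rcases le_total r b with hrb | hbr
  · rw [abs_of_nonneg (intervalIntegral.integral_nonneg hrb fun x _ => hnonneg x)]
    calc ∫ x in r..b, 1 / Sig a m x lam
        ≤ ∫ x in r..b, (x : ℝ) ^ (-2 : ℤ) := by
          apply intervalIntegral.integral_mono_on hrb (hIntf r b hrm hb) (hIntg r b hrm hb)
          intro x hx
          exact hptwise x (le_trans hrm hx.1)
      _ ≤ 1 / a := integral_inv_sq_bound a m r b ha ham hrm hrb
  · rw [intervalIntegral.integral_symm, abs_neg,
      abs_of_nonneg (intervalIntegral.integral_nonneg hbr fun x _ => hnonneg x)]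
    calc ∫ x in b..r, 1 / Sig a m x lam
        ≤ ∫ x in b..r, (x : ℝ) ^ (-2 : ℤ) := by
          apply intervalIntegral.integral_mono_on hbr (hIntf b r hb hrm) (hIntg b r hb hrm)
          intro x hx
          exact hptwise x (le_trans hb hx.1)
      _ ≤ 1 / a := integral_inv_sq_bound a m b r ha ham hb hbr
end

section
/- There exist constants C > 0 and δ > 0, depending only on a and m, such that for every θ ∈ (0, π/2) and every r ∈ [r₋, ∞) with |r − r₊| ≤ δ, one has 0 ≤ sin θ*(r, θ) − sin θ ≤ C·(r − r₊)². -/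
/-- `F(θ*; r, θ) = ∫_{θ*}^{θ} dθ′/(a√(sin²θ* − sin²θ′))
  + sgn(r − r₊)·∫_{r₊}^{r} dr′/Σ(r′, sin²θ*)` -/
noncomputable def Fker (a m θs r θ : ℝ) : ℝ :=
  (∫ θ' in θs..θ, 1 / (a * Real.sqrt (Real.sin θs ^ 2 - Real.sin θ' ^ 2)))
    + Real.sign (r - rPlus a m)
      * ∫ r' in (rPlus a m)..r, 1 / Sig a m r' (Real.sin θs ^ 2)

open MeasureTheory Set Real intervalIntegral

/-- Lower bound for the quantity under the square root in `Sig` near the horizon. -/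
lemma sig_lower (a m : ℝ) (ha : 0 < a) (ham : a < m) (lam : ℝ) (hl0 : 0 ≤ lam) (hl1 : lam ≤ 1)
    (x : ℝ) (hx : |x - rPlus a m| ≤ min 1 (a ^ 2 / (2 * (1 + 2 * m)))) :
    a ^ 2 / 2 ≤ Real.sqrt ((x ^ 2 + a ^ 2) ^ 2 - a ^ 2 * lam * (x ^ 2 - 2 * m * x + a ^ 2)) := by
  have hm : 0 < m := ha.trans ham
  set t := Real.sqrt (m ^ 2 - a ^ 2) with ht
  have ht2 : t ^ 2 = m ^ 2 - a ^ 2 := Real.sq_sqrt (by nlinarith)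
  have ht0 : 0 ≤ t := Real.sqrt_nonneg _
  have htm : t ≤ m := by nlinarith
  have h1 : |x - (m + t)| ≤ 1 := le_trans hx (min_le_left _ _)
  have h2 : |x - (m + t)| ≤ a ^ 2 / (2 * (1 + 2 * m)) := le_trans hx (min_le_right _ _)
  rw [abs_le] at h1 h2
  have hΔ : |x ^ 2 - 2 * m * x + a ^ 2| ≤ a ^ 2 / 2 := by
    have heq : x ^ 2 - 2 * m * x + a ^ 2 = (x - (m + t)) * (x - (m - t)) := by nlinarith
    rw [heq, abs_mul]
    have h3 : |x - (m - t)| ≤ 1 + 2 * m := by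
      rw [abs_le]; constructor <;> nlinarith [h1.1, h1.2]
    calc |x - (m + t)| * |x - (m - t)| ≤ (a ^ 2 / (2 * (1 + 2 * m))) * (1 + 2 * m) := by
          apply mul_le_mul (by rw [abs_le]; exact h2) h3 (abs_nonneg _) (by positivity)
      _ = a ^ 2 / 2 := by field_simp
  rw [abs_le] at hΔ
  have hX : (a ^ 2 / 2) ^ 2 ≤ (x ^ 2 + a ^ 2) ^ 2 - a ^ 2 * lam * (x ^ 2 - 2 * m * x + a ^ 2) := by
    have hlu : a ^ 2 * lam * (x ^ 2 - 2 * m * x + a ^ 2) ≤ a ^ 2 * (a ^ 2 / 2) := by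
      calc a ^ 2 * lam * (x ^ 2 - 2 * m * x + a ^ 2) ≤ a ^ 2 * lam * (a ^ 2 / 2) :=
            mul_le_mul_of_nonneg_left hΔ.2 (by positivity)
        _ ≤ a ^ 2 * 1 * (a ^ 2 / 2) := by
            nlinarith [mul_le_mul_of_nonneg_right hl1
              (show (0:ℝ) ≤ a ^ 2 * (a ^ 2 / 2) by positivity)]
        _ = a ^ 2 * (a ^ 2 / 2) := by ring
    nlinarith [sq_nonneg x, sq_nonneg a, sq_nonneg (x ^ 2)]
  calc a ^ 2 / 2 = Real.sqrt ((a ^ 2 / 2) ^ 2) := (Real.sqrt_sq (by positivity)).symm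
    _ ≤ _ := Real.sqrt_le_sqrt hX

/-- Key pointwise lower bound on `sin² θ* − sin² x`. -/
lemma key_lb {θ θs : ℝ} (hθ0 : 0 < θ) (hθs2 : θs < Real.pi / 2) {x : ℝ}
    (hx1 : θ ≤ x) (hx2 : x ≤ θs) :
    Real.sin θ * Real.cos θs ^ 2 * (θs - x) ≤ Real.sin θs ^ 2 - Real.sin x ^ 2 := by
  have hπ := Real.pi_pos
  have hx0 : 0 < x := lt_of_lt_of_le hθ0 hx1
  have hθs0 : 0 < θs := lt_of_lt_of_le hx0 hx2
  have hsθ : 0 < Real.sin θ := Real.sin_pos_of_pos_of_lt_pi hθ0 (by linarith)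
  have hsx : Real.sin θ ≤ Real.sin x :=
    Real.strictMonoOn_sin.monotoneOn ⟨by linarith, by linarith⟩ ⟨by linarith, by linarith⟩ hx1
  have hsxs : Real.sin x ≤ Real.sin θs :=
    Real.strictMonoOn_sin.monotoneOn ⟨by linarith, by linarith⟩ ⟨by linarith, by linarith⟩ hx2
  have hcθs : 0 < Real.cos θs := Real.cos_pos_of_mem_Ioo ⟨by linarith, hθs2⟩
  rcases eq_or_lt_of_le hx2 with h | h
  · subst h; simp
  · set t := (θs - x) / 2 with htdef
    have ht0 : 0 < t := by simp [htdef]; linarith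
    have ht2 : t < Real.pi / 2 := by rw [htdef]; linarith
    have hct : 0 < Real.cos t := Real.cos_pos_of_mem_Ioo ⟨by linarith, ht2⟩
    have h1 : t * Real.cos t ≤ Real.sin t := by
      have := Real.lt_tan ht0 ht2
      rw [Real.tan_eq_sin_div_cos, lt_div_iff₀ hct] at this
      linarith
    have h2 : Real.cos θs ≤ Real.cos t := by
      apply Real.cos_le_cos_of_nonneg_of_le_pi (by linarith) (by linarith)
      rw [htdef]; linarith
    have h3 : Real.cos θs ≤ Real.cos ((θs + x) / 2) := by
      apply Real.cos_le_cos_of_nonneg_of_le_pi (by positivity) (by linarith)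
      linarith
    have hsub : Real.cos θs ^ 2 * (θs - x) ≤ Real.sin θs - Real.sin x := by
      have hss := Real.sin_sub_sin θs x
      have hst : t * Real.cos θs ≤ Real.sin t := by nlinarith
      nlinarith [mul_le_mul hst h3 hcθs.le (by nlinarith : (0:ℝ) ≤ Real.sin t)]
    have hsum : Real.sin θ ≤ Real.sin θs + Real.sin x := by nlinarith
    nlinarith [mul_le_mul hsub hsum hsθ.le (by nlinarith : (0:ℝ) ≤ Real.sin θs - Real.sin x)]

/-- The angular integrand is interval integrable. -/
lemma theta_integrable (a : ℝ) (ha : 0 < a) {θ θs : ℝ} (hθ0 : 0 < θ) (hlt : θ < θs)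
    (hθs2 : θs < Real.pi / 2) :
    IntervalIntegrable (fun x => 1 / (a * Real.sqrt (Real.sin θs ^ 2 - Real.sin x ^ 2)))
      volume θ θs := by
  have hπ := Real.pi_pos
  have hsθ : 0 < Real.sin θ := Real.sin_pos_of_pos_of_lt_pi hθ0 (by linarith)
  have hcθs : 0 < Real.cos θs := Real.cos_pos_of_mem_Ioo ⟨by linarith, hθs2⟩
  set c₀ := Real.sin θ * Real.cos θs ^ 2 with hc₀def
  have hc₀ : 0 < c₀ := by positivity
  set K := 1 / (a * Real.sqrt c₀) with hKdef
  have hK : 0 < K := by positivity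
  have hint : IntervalIntegrable (fun x => K * (θs - x) ^ (-(1/2) : ℝ)) volume θ θs := by
    apply IntervalIntegrable.const_mul
    have h := (intervalIntegral.intervalIntegrable_rpow' (a := 0) (b := θs - θ)
      (r := -(1/2)) (by norm_num)).comp_sub_left θs
    simpa using h.symm
  apply IntervalIntegrable.mono_fun hint
  · apply Measurable.aestronglyMeasurable
    fun_prop
  · rw [uIoc_of_le hlt.le]
    filter_upwards [ae_restrict_mem measurableSet_Ioc] with x hx
    obtain ⟨hx1, hx2⟩ := hx
    have hrpow_nonneg : (0:ℝ) ≤ (θs - x) ^ (-(1/2) : ℝ) := Real.rpow_nonneg (by linarith) _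
    rw [Real.norm_eq_abs, Real.norm_eq_abs, abs_of_nonneg (by positivity),
      abs_of_nonneg (by positivity)]
    rcases eq_or_lt_of_le hx2 with h | h
    · subst h; simp [Real.sqrt_zero]
    · have hkey := key_lb hθ0 hθs2 hx1.le hx2
      have hD : 0 < Real.sin θs ^ 2 - Real.sin x ^ 2 := by nlinarith
      have heq : K * (θs - x) ^ (-(1/2) : ℝ) = 1 / (a * Real.sqrt (c₀ * (θs - x))) := by
        rw [hKdef, Real.sqrt_mul hc₀.le, Real.rpow_neg (by linarith), ← Real.sqrt_eq_rpow]
        field_simp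
      rw [heq]
      have hsp : 0 < Real.sqrt (c₀ * (θs - x)) :=
        Real.sqrt_pos.mpr (mul_pos hc₀ (by linarith))
      apply one_div_le_one_div_of_le (mul_pos ha hsp)
      apply mul_le_mul_of_nonneg_left _ ha.le
      exact Real.sqrt_le_sqrt (by nlinarith)

set_option maxHeartbeats 1000000 in
/-- Quadratic closeness of `sin θ*(r, θ)` to `sin θ` near the event horizon
`r = r₊`, with constants depending only on `a` and `m`. -/
theorem sin_thetaStar_near_horizon (a m : ℝ) (ha : 0 < a) (ham : a < m)
    (θstar : ℝ → ℝ → ℝ)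
    (hθs : ∀ r ∈ Set.Ici (rMinus a m), ∀ θ ∈ Set.Ioo 0 (Real.pi / 2),
      θstar r θ ∈ Set.Ico θ (Real.pi / 2) ∧ Fker a m (θstar r θ) r θ = 0) :
    ∃ C : ℝ, 0 < C ∧ ∃ δ : ℝ, 0 < δ ∧
      ∀ θ ∈ Set.Ioo 0 (Real.pi / 2), ∀ r ∈ Set.Ici (rMinus a m),
        |r - rPlus a m| ≤ δ →
        0 ≤ Real.sin (θstar r θ) - Real.sin θ ∧
        Real.sin (θstar r θ) - Real.sin θ ≤ C * (r - rPlus a m) ^ 2 := by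
  have hm : 0 < m := ha.trans ham
  have hπ := Real.pi_pos
  refine ⟨8 / a ^ 2, by positivity, min 1 (a ^ 2 / (2 * (1 + 2 * m))), by positivity, ?_⟩
  intro θ hθ r hr hrδ
  obtain ⟨hmem, hF⟩ := hθs r hr θ hθ
  set θs := θstar r θ with hθsdef
  obtain ⟨hθθs, hθs2⟩ := hmem
  have hθ0 : 0 < θ := hθ.1
  have hθπ : θ < Real.pi / 2 := hθ.2
  have hsmono : Real.sin θ ≤ Real.sin θs :=
    Real.strictMonoOn_sin.monotoneOn ⟨by linarith, by linarith⟩ ⟨by linarith, by linarith⟩ hθθs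
  refine ⟨by linarith, ?_⟩
  rcases eq_or_lt_of_le hθθs with heq | hlt
  · rw [← heq]
    simp only [sub_self]
    positivity
  set s := Real.sin θs - Real.sin θ with hsdef
  have hθs0 : 0 < θs := hθ0.trans hlt
  have hsθ : 0 < Real.sin θ := Real.sin_pos_of_pos_of_lt_pi hθ0 (by linarith)
  have hcθs : 0 < Real.cos θs := Real.cos_pos_of_mem_Ioo ⟨by linarith, hθs2⟩
  have hs_pos : 0 < s := by
    have := Real.strictMonoOn_sin (Set.mem_Icc.mpr ⟨by linarith, by linarith⟩)
      (Set.mem_Icc.mpr ⟨by linarith, by linarith⟩) hlt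
    simp only [hsdef]; linarith
  -- r-side: bound the radial integral
  have hlam0 : 0 ≤ Real.sin θs ^ 2 := sq_nonneg _
  have hlam1 : Real.sin θs ^ 2 ≤ 1 := by
    nlinarith [Real.sin_le_one θs, Real.sin_nonneg_of_nonneg_of_le_pi
      (show (0:ℝ) ≤ θs by linarith) (show θs ≤ Real.pi by linarith)]
  have hδpos : (0:ℝ) < min 1 (a ^ 2 / (2 * (1 + 2 * m))) := by positivity
  have hmemx : ∀ x ∈ Set.uIcc (rPlus a m) r,
      |x - rPlus a m| ≤ min 1 (a ^ 2 / (2 * (1 + 2 * m))) := by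
    intro x hx
    rcases le_total (rPlus a m) r with h | h
    · rw [Set.uIcc_of_le h] at hx
      rw [abs_le] at hrδ ⊢
      exact ⟨by linarith [hx.1], by linarith [hx.2, hrδ.2]⟩
    · rw [Set.uIcc_of_ge h] at hx
      rw [abs_le] at hrδ ⊢
      exact ⟨by linarith [hx.1, hrδ.1], by linarith [hx.2]⟩
  have hSig : ∀ x ∈ Set.uIcc (rPlus a m) r, a ^ 2 / 2 ≤ Sig a m x (Real.sin θs ^ 2) :=
    fun x hx => sig_lower a m ha ham _ hlam0 hlam1 x (hmemx x hx)
  have hBbd : |∫ r' in (rPlus a m)..r, 1 / Sig a m r' (Real.sin θs ^ 2)| ≤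
      2 / a ^ 2 * |r - rPlus a m| := by
    rw [← Real.norm_eq_abs]
    apply intervalIntegral.norm_integral_le_of_norm_le_const
    intro x hx
    have h2 := hSig x (Set.uIoc_subset_uIcc hx)
    have hSpos : 0 < Sig a m x (Real.sin θs ^ 2) := lt_of_lt_of_le (by positivity) h2
    rw [Real.norm_eq_abs, abs_of_nonneg (by positivity)]
    calc 1 / Sig a m x (Real.sin θs ^ 2) ≤ 1 / (a ^ 2 / 2) :=
          one_div_le_one_div_of_le (by positivity) h2
      _ = 2 / a ^ 2 := by field_simp
  -- θ-side: lower bound the angular integral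
  have hint_f := theta_integrable a ha hθ0 hlt hθs2
  have hD : 0 < Real.sin θs ^ 2 - Real.sin θ ^ 2 := by nlinarith
  set g := 1 / (a * Real.sqrt (Real.sin θs ^ 2 - Real.sin θ ^ 2)) with hgdef
  have hg : 0 < g := by
    rw [hgdef]
    exact div_pos one_pos (mul_pos ha (Real.sqrt_pos.mpr hD))
  have hae : (fun _ : ℝ => g) ≤ᵐ[volume.restrict (Set.Icc θ θs)]
      (fun x => 1 / (a * Real.sqrt (Real.sin θs ^ 2 - Real.sin x ^ 2))) := by
    have hne : ∀ᵐ x ∂(volume.restrict (Set.Icc θ θs)), x ≠ θs := by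
      apply ae_restrict_of_ae
      rw [MeasureTheory.ae_iff]
      simp only [not_not, Set.setOf_eq_eq_singleton]
      exact Real.volume_singleton
    filter_upwards [ae_restrict_mem measurableSet_Icc, hne] with x hx hxne
    have hxlt : x < θs := lt_of_le_of_ne hx.2 hxne
    have hkey := key_lb hθ0 hθs2 hx.1 hx.2
    have hDx : 0 < Real.sin θs ^ 2 - Real.sin x ^ 2 := by
      nlinarith [mul_pos (mul_pos hsθ (pow_pos hcθs 2)) (sub_pos.mpr hxlt)]
    have hsx : Real.sin θ ≤ Real.sin x :=
      Real.strictMonoOn_sin.monotoneOn ⟨by linarith, by linarith⟩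
        ⟨by linarith [hx.1], by linarith [hx.2]⟩ hx.1
    rw [hgdef]
    apply one_div_le_one_div_of_le (mul_pos ha (Real.sqrt_pos.mpr hDx))
    exact mul_le_mul_of_nonneg_left (Real.sqrt_le_sqrt (by nlinarith)) ha.le
  have hlow : (θs - θ) * g ≤
      ∫ x in θ..θs, 1 / (a * Real.sqrt (Real.sin θs ^ 2 - Real.sin x ^ 2)) := by
    have h := intervalIntegral.integral_mono_ae_restrict hlt.le
      (_root_.intervalIntegrable_const (c := g)) hint_f hae
    rwa [intervalIntegral.integral_const, smul_eq_mul] at h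
  -- use the equation Fker = 0
  have hI : (∫ x in θ..θs, 1 / (a * Real.sqrt (Real.sin θs ^ 2 - Real.sin x ^ 2)))
      = Real.sign (r - rPlus a m) * ∫ r' in (rPlus a m)..r, 1 / Sig a m r' (Real.sin θs ^ 2) := by
    have hsym := intervalIntegral.integral_symm (a := θ) (b := θs)
      (f := fun x => 1 / (a * Real.sqrt (Real.sin θs ^ 2 - Real.sin x ^ 2))) (μ := volume)
    unfold Fker at hF
    rw [hsym] at hF
    linarith
  have hsign : |Real.sign (r - rPlus a m)| ≤ 1 := by
    rcases lt_trichotomy (r - rPlus a m) 0 with h | h | h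
    · simp [Real.sign_of_neg h]
    · simp [h]
    · simp [Real.sign_of_pos h]
  have hIub : (∫ x in θ..θs, 1 / (a * Real.sqrt (Real.sin θs ^ 2 - Real.sin x ^ 2)))
      ≤ 2 / a ^ 2 * |r - rPlus a m| := by
    rw [hI]
    calc Real.sign (r - rPlus a m) * ∫ r' in (rPlus a m)..r, 1 / Sig a m r' (Real.sin θs ^ 2)
        ≤ |Real.sign (r - rPlus a m) * ∫ r' in (rPlus a m)..r, 1 / Sig a m r' (Real.sin θs ^ 2)| :=
          le_abs_self _
      _ = |Real.sign (r - rPlus a m)| * |∫ r' in (rPlus a m)..r, 1 / Sig a m r' (Real.sin θs ^ 2)| :=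
          abs_mul _ _
      _ ≤ 1 * (2 / a ^ 2 * |r - rPlus a m|) :=
          mul_le_mul hsign hBbd (abs_nonneg _) zero_le_one
      _ = 2 / a ^ 2 * |r - rPlus a m| := one_mul _
  -- chain of inequalities
  have hsle : s ≤ θs - θ := by
    have hss := Real.sin_sub_sin θs θ
    have h1 : Real.sin ((θs - θ) / 2) ≤ (θs - θ) / 2 := Real.sin_le (by linarith)
    have h2 : Real.cos ((θs + θ) / 2) ≤ 1 := Real.cos_le_one _
    have h3 : 0 ≤ Real.sin ((θs - θ) / 2) :=
      Real.sin_nonneg_of_nonneg_of_le_pi (by linarith) (by linarith)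
    have h4 : 0 ≤ Real.cos ((θs + θ) / 2) :=
      Real.cos_nonneg_of_mem_Icc ⟨by linarith, by linarith⟩
    nlinarith
  have hu2 : Real.sqrt (2 * s) ^ 2 = 2 * s := Real.sq_sqrt (by linarith)
  have hu : 0 < Real.sqrt (2 * s) := Real.sqrt_pos.mpr (by linarith)
  have hgl : 1 / (a * Real.sqrt (2 * s)) ≤ g := by
    rw [hgdef]
    apply one_div_le_one_div_of_le (mul_pos ha (Real.sqrt_pos.mpr hD))
    apply mul_le_mul_of_nonneg_left _ ha.le
    apply Real.sqrt_le_sqrt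
    nlinarith [Real.sin_le_one θs, Real.sin_le_one θ]
  have hchain : s * (1 / (a * Real.sqrt (2 * s))) ≤ 2 / a ^ 2 * |r - rPlus a m| := by
    calc s * (1 / (a * Real.sqrt (2 * s))) ≤ s * g :=
          mul_le_mul_of_nonneg_left hgl hs_pos.le
      _ ≤ (θs - θ) * g := mul_le_mul_of_nonneg_right hsle hg.le
      _ ≤ _ := hlow
      _ ≤ _ := hIub
  have hane : a ≠ 0 := ha.ne'
  have hune : Real.sqrt (2 * s) ≠ 0 := hu.ne'
  have ha2 : (0:ℝ) < a ^ 2 := by positivity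
  have hfin' : a * s ≤ 2 * |r - rPlus a m| * Real.sqrt (2 * s) := by
    have h3 := mul_le_mul_of_nonneg_right hchain
      (by positivity : (0:ℝ) ≤ a ^ 2 * Real.sqrt (2 * s))
    have e1 : s * (1 / (a * Real.sqrt (2 * s))) * (a ^ 2 * Real.sqrt (2 * s)) = a * s := by
      field_simp
    have e2 : 2 / a ^ 2 * |r - rPlus a m| * (a ^ 2 * Real.sqrt (2 * s))
        = 2 * |r - rPlus a m| * Real.sqrt (2 * s) := by
      field_simp
    rw [e1, e2] at h3
    exact h3
  have habs2 : |r - rPlus a m| ^ 2 = (r - rPlus a m) ^ 2 := sq_abs _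
  have hsq := mul_self_le_mul_self (mul_nonneg ha.le hs_pos.le) hfin'
  have e3 : 2 * |r - rPlus a m| * Real.sqrt (2 * s) * (2 * |r - rPlus a m| * Real.sqrt (2 * s))
      = 8 * (r - rPlus a m) ^ 2 * s := by
    rw [show 2 * |r - rPlus a m| * Real.sqrt (2 * s) * (2 * |r - rPlus a m| * Real.sqrt (2 * s))
        = 4 * |r - rPlus a m| ^ 2 * Real.sqrt (2 * s) ^ 2 by ring, hu2, habs2]
    ring
  rw [e3] at hsq
  rw [div_mul_eq_mul_div, le_div_iff₀ ha2]
  nlinarith [hsq, hs_pos]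
end

section
/- Extend θ* by setting θ*(r, θ) = π − θ*(r, π − θ) for θ ∈ (π/2, π). Then for every r ∈ [m, ∞) and every θ ∈ (0, π/2) ∪ (π/2, π), one has sin θ*(r, θ)/sin θ + cos θ/cos θ*(r, θ) ≤ sec 1 + cosh 1. In particular, this bound is independent of a and m. -/
open Real MeasureTheory Set intervalIntegral

lemma sq_sin_lower {θ θs : ℝ} (hθ : 0 < θ) (hθθs : θ ≤ θs) (hθs2 : θs < Real.pi / 2)
    {x : ℝ} (hx : x ∈ Icc θ θs) :
    2 / Real.pi * (Real.sin θs * Real.cos θs) * (θs - x)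
      ≤ Real.sin θs ^ 2 - Real.sin x ^ 2 := by
  have hπ := Real.pi_gt_three
  obtain ⟨hx1, hx2⟩ := hx
  have h1 : Real.sin θs - Real.sin x
      = 2 * Real.sin ((θs - x) / 2) * Real.cos ((θs + x) / 2) := Real.sin_sub_sin _ _
  have h2 : 2 / Real.pi * ((θs - x) / 2) ≤ Real.sin ((θs - x) / 2) :=
    Real.mul_le_sin (by linarith) (by linarith)
  have h3 : Real.cos θs ≤ Real.cos ((θs + x) / 2) :=
    Real.cos_le_cos_of_nonneg_of_le_pi (by linarith) (by linarith) (by linarith)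
  have hcθs : 0 < Real.cos θs := Real.cos_pos_of_mem_Ioo ⟨by linarith, hθs2⟩
  have hsx : 0 ≤ Real.sin x := Real.sin_nonneg_of_nonneg_of_le_pi (by linarith) (by linarith)
  have hss : Real.sin x ≤ Real.sin θs :=
    Real.sin_le_sin_of_le_of_le_pi_div_two (by linarith) hθs2.le hx2
  have h2' : 0 ≤ 2 / Real.pi * ((θs - x) / 2) := mul_nonneg (by positivity) (by linarith)
  have h5 : 2 / Real.pi * ((θs - x) / 2) * Real.cos θs
      ≤ Real.sin ((θs - x) / 2) * Real.cos ((θs + x) / 2) :=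
    mul_le_mul h2 h3 hcθs.le (by linarith)
  have hsθs : 0 < Real.sin θs := Real.sin_pos_of_pos_of_lt_pi (by linarith) (by linarith)
  nlinarith [mul_le_mul_of_nonneg_right h5 hsθs.le, mul_nonneg (sub_nonneg.2 hss) hsx]

lemma dominating_bound {K θs : ℝ} (hK : 0 < K) {x : ℝ} (hx : x ≤ θs)
    (hlow : K * (θs - x) ≤ Real.sin θs ^ 2 - Real.sin x ^ 2) :
    1 / Real.sqrt (Real.sin θs ^ 2 - Real.sin x ^ 2)
      ≤ (1 / Real.sqrt K) * (θs - x) ^ (-(1/2) : ℝ) := by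
  have hx0 : 0 ≤ θs - x := by linarith
  have hrw : (θs - x) ^ (-(1/2) : ℝ) = 1 / Real.sqrt (θs - x) := by
    rw [Real.rpow_neg hx0, Real.sqrt_eq_rpow, one_div, one_div]
  rw [hrw]
  have hsq : Real.sqrt (K * (θs - x)) = Real.sqrt K * Real.sqrt (θs - x) :=
    Real.sqrt_mul hK.le _
  rcases eq_or_lt_of_le hx0 with h0 | h0
  · have hxeq : x = θs := by linarith
    subst hxeq
    simp
  · have hpos : 0 < K * (θs - x) := by positivity
    have h1 : Real.sqrt (K * (θs - x)) ≤ Real.sqrt (Real.sin θs ^ 2 - Real.sin x ^ 2) :=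
      Real.sqrt_le_sqrt hlow
    have h2 : 0 < Real.sqrt (K * (θs - x)) := Real.sqrt_pos.2 hpos
    have hcomb : (1 / Real.sqrt K) * (1 / Real.sqrt (θs - x))
        = 1 / (Real.sqrt K * Real.sqrt (θs - x)) := by
      rw [div_mul_div_comm, one_mul]
    rw [hcomb, ← hsq]
    exact one_div_le_one_div_of_le h2 h1

set_option maxHeartbeats 1000000 in
lemma angular_core {θ θs A : ℝ} (hθ : 0 < θ) (hθθs : θ ≤ θs) (hθs2 : θs < Real.pi / 2)
    (hA : (∫ x in θ..θs, 1 / Real.sqrt (Real.sin θs ^ 2 - Real.sin x ^ 2)) = A)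
    (hA1 : A ≤ 1) :
    Real.sin θs / Real.sin θ ≤ 1 / Real.cos 1 ∧ Real.cos θ / Real.cos θs ≤ Real.cosh 1 := by
  have hπ := Real.pi_gt_three
  have hsθ : 0 < Real.sin θ := Real.sin_pos_of_pos_of_lt_pi hθ (by linarith)
  have hsθs : 0 < Real.sin θs := Real.sin_pos_of_pos_of_lt_pi (by linarith) (by linarith)
  have hcθs : 0 < Real.cos θs := Real.cos_pos_of_mem_Ioo ⟨by linarith, hθs2⟩
  have hcθ : 0 < Real.cos θ := Real.cos_pos_of_mem_Ioo ⟨by linarith, by linarith⟩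
  have hccθ : Real.cos θs ≤ Real.cos θ :=
    Real.cos_le_cos_of_nonneg_of_le_pi (by linarith) (by linarith) hθθs
  have hssθ : Real.sin θ ≤ Real.sin θs :=
    Real.sin_le_sin_of_le_of_le_pi_div_two (by linarith) hθs2.le hθθs
  set K : ℝ := 2 / Real.pi * (Real.sin θs * Real.cos θs) with hKdef
  have hK : 0 < K := by positivity
  set f : ℝ → ℝ := fun x => 1 / Real.sqrt (Real.sin θs ^ 2 - Real.sin x ^ 2) with hfdef
  set H : ℝ → ℝ := fun x => (1 / Real.sqrt K) * (θs - x) ^ (-(1/2) : ℝ) with hHdef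
  -- H integrable
  have hHint : IntervalIntegrable H volume θ θs := by
    have h : IntervalIntegrable (fun x : ℝ => x ^ (-(1/2) : ℝ)) volume 0 (θs - θ) :=
      intervalIntegrable_rpow' (by norm_num)
    have h2 := h.comp_sub_left θs
    simp only [sub_zero, sub_sub_cancel] at h2
    exact h2.symm.const_mul _
  -- pointwise f ≤ H on Icc
  have hfH : ∀ x ∈ Icc θ θs, f x ≤ H x := fun x hx =>
    dominating_bound hK hx.2 (sq_sin_lower hθ hθθs hθs2 hx)
  have hf0 : ∀ x, 0 ≤ f x := fun x => by positivity
  -- measurability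
  have hmeasD : Measurable fun x => Real.sqrt (Real.sin θs ^ 2 - Real.sin x ^ 2) :=
    (Real.continuous_sqrt.comp (continuous_const.sub (Real.continuous_sin.pow 2))).measurable
  have hIsub : Set.uIoc θ θs ⊆ Icc θ θs := by
    rw [uIoc_of_le hθθs]; exact Ioc_subset_Icc_self
  have hbound : ∀ᵐ x ∂(volume.restrict (Set.uIoc θ θs)), ‖f x‖ ≤ H x :=
    ae_restrict_of_forall_mem measurableSet_uIoc
      (fun x hx => by rw [Real.norm_eq_abs, abs_of_nonneg (hf0 x)]; exact hfH x (hIsub hx))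
  have hfint : IntervalIntegrable f volume θ θs :=
    hHint.mono_fun' (measurable_const.div hmeasD).aestronglyMeasurable hbound
  -- g₁
  set g₁ : ℝ → ℝ := fun x => Real.cos x / Real.sqrt (Real.sin θs ^ 2 - Real.sin x ^ 2)
    with hg₁def
  have hg₁f : ∀ x ∈ Icc θ θs, g₁ x ≤ f x := by
    intro x hx
    have h := mul_le_mul_of_nonneg_right (Real.cos_le_one x)
      (inv_nonneg.2 (Real.sqrt_nonneg (Real.sin θs ^ 2 - Real.sin x ^ 2)))
    rw [hg₁def, hfdef]
    simp only [div_eq_mul_inv, one_mul]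
    simpa using h
  have hg₁0 : ∀ x ∈ Icc θ θs, 0 ≤ g₁ x := by
    intro x hx
    have : 0 ≤ Real.cos x := (Real.cos_pos_of_mem_Ioo ⟨by linarith [hx.1],
      by linarith [hx.2]⟩).le
    positivity
  have hg₁int : IntervalIntegrable g₁ volume θ θs := by
    refine hHint.mono_fun' ((Real.continuous_cos.measurable.div hmeasD)).aestronglyMeasurable
      (ae_restrict_of_forall_mem measurableSet_uIoc (fun x hx => ?_))
    show ‖g₁ x‖ ≤ H x
    rw [Real.norm_eq_abs, abs_of_nonneg (hg₁0 x (hIsub hx))]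
    exact le_trans (hg₁f x (hIsub hx)) (hfH x (hIsub hx))
  -- g₂
  set g₂ : ℝ → ℝ := fun x => Real.sin x / Real.sqrt (Real.sin θs ^ 2 - Real.sin x ^ 2)
    with hg₂def
  have hg₂f : ∀ x ∈ Icc θ θs, g₂ x ≤ f x := by
    intro x hx
    have h := mul_le_mul_of_nonneg_right (Real.sin_le_one x)
      (inv_nonneg.2 (Real.sqrt_nonneg (Real.sin θs ^ 2 - Real.sin x ^ 2)))
    rw [hg₂def, hfdef]
    simp only [div_eq_mul_inv, one_mul]
    simpa using h
  have hg₂0 : ∀ x ∈ Icc θ θs, 0 ≤ g₂ x := by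
    intro x hx
    have : 0 ≤ Real.sin x := Real.sin_nonneg_of_nonneg_of_le_pi (by linarith [hx.1])
      (by linarith [hx.2])
    positivity
  have hg₂int : IntervalIntegrable g₂ volume θ θs := by
    refine hHint.mono_fun' ((Real.continuous_sin.measurable.div hmeasD)).aestronglyMeasurable
      (ae_restrict_of_forall_mem measurableSet_uIoc (fun x hx => ?_))
    show ‖g₂ x‖ ≤ H x
    rw [Real.norm_eq_abs, abs_of_nonneg (hg₂0 x (hIsub hx))]
    exact le_trans (hg₂f x (hIsub hx)) (hfH x (hIsub hx))
  -- A nonneg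
  have hA0 : 0 ≤ A := hA ▸ intervalIntegral.integral_nonneg hθθs (fun u _ => hf0 u)
  -- value of ∫ g₁
  have hI₁ : (∫ x in θ..θs, g₁ x) = Real.pi / 2 - Real.arcsin (Real.sin θ / Real.sin θs) := by
    have hval := integral_eq_sub_of_hasDerivAt_of_le hθθs
      (f := fun t => Real.arcsin (Real.sin t / Real.sin θs))
      (f' := g₁)
      ((Real.continuous_arcsin.comp (Real.continuous_sin.div_const _)).continuousOn)
      ?_ hg₁int
    · rw [hval]
      simp [div_self hsθs.ne']
    · intro x hx
      have hsx : Real.sin x < Real.sin θs :=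
        Real.sin_lt_sin_of_lt_of_le_pi_div_two (by linarith [hx.1]) hθs2.le hx.2
      have hsx0 : 0 < Real.sin x :=
        Real.sin_pos_of_pos_of_lt_pi (by linarith [hx.1]) (by linarith [hx.2])
      have hu1 : Real.sin x / Real.sin θs < 1 := (div_lt_one hsθs).2 hsx
      have hu0 : 0 < Real.sin x / Real.sin θs := by positivity
      have hd1 : HasDerivAt (fun t => Real.sin t / Real.sin θs)
          (Real.cos x / Real.sin θs) x := (Real.hasDerivAt_sin x).div_const _
      have hd2 := (Real.hasDerivAt_arcsin (by linarith) (ne_of_lt hu1)).comp x hd1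
      convert hd2 using 1
      · rfl
      · rfl
      have hD : 0 < Real.sin θs ^ 2 - Real.sin x ^ 2 := by nlinarith
      have h1u : (1 : ℝ) - (Real.sin x / Real.sin θs) ^ 2
          = (Real.sin θs ^ 2 - Real.sin x ^ 2) / Real.sin θs ^ 2 := by
        field_simp
      show g₁ x = _
      rw [hg₁def]
      have hsqD : Real.sqrt (Real.sin θs ^ 2 - Real.sin x ^ 2) ≠ 0 :=
        (Real.sqrt_pos.2 hD).ne'
      rw [h1u, Real.sqrt_div (le_of_lt hD) _, Real.sqrt_sq hsθs.le]
      field_simp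
  -- value of ∫ g₂
  set y : ℝ := Real.cos θ / Real.cos θs with hydef
  have hy1 : 1 ≤ y := (one_le_div hcθs).2 hccθ
  have hI₂ : (∫ x in θ..θs, g₂ x) = Real.log (y + Real.sqrt (y ^ 2 - 1)) := by
    have hcontarg : ContinuousOn
        (fun t => Real.cos t / Real.cos θs + Real.sqrt ((Real.cos t / Real.cos θs) ^ 2 - 1))
        (Icc θ θs) :=
      ((Real.continuous_cos.div_const _).continuousOn).add
        (Real.continuous_sqrt.comp_continuousOn
          ((((Real.continuous_cos.div_const _).pow 2).sub continuous_const).continuousOn))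
    have hargpos : ∀ t ∈ Icc θ θs,
        0 < Real.cos t / Real.cos θs + Real.sqrt ((Real.cos t / Real.cos θs) ^ 2 - 1) := by
      intro t ht
      have h1 : Real.cos θs ≤ Real.cos t :=
        Real.cos_le_cos_of_nonneg_of_le_pi (by linarith [ht.1]) (by linarith [ht.2]) ht.2
      have : (1:ℝ) ≤ Real.cos t / Real.cos θs := (one_le_div hcθs).2 h1
      have := Real.sqrt_nonneg ((Real.cos t / Real.cos θs) ^ 2 - 1)
      linarith
    have hval := integral_eq_sub_of_hasDerivAt_of_le hθθs
      (f := fun t => -Real.log (Real.cos t / Real.cos θs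
        + Real.sqrt ((Real.cos t / Real.cos θs) ^ 2 - 1)))
      (f' := g₂)
      ((hcontarg.log (fun t ht => (hargpos t ht).ne')).neg)
      ?_ hg₂int
    · rw [hval]
      have h1 : Real.cos θs / Real.cos θs = 1 := div_self hcθs.ne'
      simp only [h1, hydef]
      norm_num
    · intro x hx
      have hcx : Real.cos θs < Real.cos x :=
        Real.cos_lt_cos_of_nonneg_of_le_pi (by linarith [hx.1]) (by linarith) hx.2
      have hq1 : 1 < Real.cos x / Real.cos θs := (one_lt_div hcθs).2 hcx
      set q : ℝ := Real.cos x / Real.cos θs with hqdef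
      have hq2 : 0 < q ^ 2 - 1 := by nlinarith
      have hwpos : 0 < Real.sqrt (q ^ 2 - 1) := Real.sqrt_pos.2 hq2
      set W : ℝ := Real.sqrt (q ^ 2 - 1) with hWdef
      have hd1 : HasDerivAt (fun t => Real.cos t / Real.cos θs)
          (-Real.sin x / Real.cos θs) x := (Real.hasDerivAt_cos x).div_const _
      have hd2 : HasDerivAt (fun t => (Real.cos t / Real.cos θs) ^ 2 - 1)
          (2 * q * (-Real.sin x / Real.cos θs)) x := by
        have h := (hd1.pow 2).sub_const 1
        convert h using 1
        · rfl
        · rfl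
        · rfl
        simp [hqdef]
      have hd3 : HasDerivAt
          (fun t => Real.sqrt ((Real.cos t / Real.cos θs) ^ 2 - 1))
          (1 / (2 * W) * (2 * q * (-Real.sin x / Real.cos θs))) x :=
        (Real.hasDerivAt_sqrt hq2.ne').comp x hd2
      have hd4 := hd1.add hd3
      have hargp : 0 < q + W := by linarith
      have hd5 := (Real.hasDerivAt_log hargp.ne').comp x hd4
      have hd6 := hd5.neg
      convert hd6 using 1
      · rfl
      change Real.sin x / Real.sqrt (Real.sin θs ^ 2 - Real.sin x ^ 2) = _
      have hsx0 : 0 < Real.sin x :=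
        Real.sin_pos_of_pos_of_lt_pi (by linarith [hx.1]) (by linarith [hx.2])
      have hpyth : Real.sin θs ^ 2 - Real.sin x ^ 2
          = Real.cos θs ^ 2 * (q ^ 2 - 1) := by
        rw [hqdef]
        rw [Real.sin_sq, Real.sin_sq]
        field_simp
        ring
      rw [hpyth, Real.sqrt_mul (sq_nonneg _), Real.sqrt_sq hcθs.le, ← hWdef]
      field_simp
      ring
  -- comparisons
  have hle₁ : Real.pi / 2 - Real.arcsin (Real.sin θ / Real.sin θs) ≤ A := by
    rw [← hA, ← hI₁]
    exact integral_mono_on hθθs hg₁int hfint hg₁f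
  have hle₂ : Real.log (y + Real.sqrt (y ^ 2 - 1)) ≤ A := by
    rw [← hA, ← hI₂]
    exact integral_mono_on hθθs hg₂int hfint hg₂f
  constructor
  · -- sin bound
    have h1 : Real.sin (Real.pi / 2 - A) ≤ Real.sin (Real.arcsin (Real.sin θ / Real.sin θs)) :=
      Real.sin_le_sin_of_le_of_le_pi_div_two (by linarith) (Real.arcsin_le_pi_div_two _)
        (by linarith)
    rw [Real.sin_pi_div_two_sub, Real.sin_arcsin (le_trans (by norm_num : (-1:ℝ) ≤ 0) (by positivity)) ((div_le_one hsθs).2 hssθ)]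
      at h1
    have hcos1 : Real.cos 1 ≤ Real.cos A :=
      Real.cos_le_cos_of_nonneg_of_le_pi hA0 (by linarith) hA1
    have hc1pos : 0 < Real.cos 1 :=
      Real.cos_pos_of_mem_Ioo ⟨by linarith, by linarith⟩
    have hkey : Real.cos 1 * Real.sin θs ≤ Real.sin θ := by
      have := (le_div_iff₀ hsθs).1 (le_trans hcos1 h1)
      linarith
    rw [div_le_div_iff₀ hsθ hc1pos]
    linarith
  · -- cos bound
    have hw2 : Real.sqrt (y ^ 2 - 1) ^ 2 = y ^ 2 - 1 := Real.sq_sqrt (by nlinarith)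
    set w : ℝ := Real.sqrt (y ^ 2 - 1) with hwdef
    have hw0 : 0 ≤ w := Real.sqrt_nonneg _
    have hzpos : 0 < y + w := by linarith
    have hz1 : 1 ≤ y + w := by linarith
    have hzle : y + w ≤ Real.exp A := (Real.log_le_iff_le_exp hzpos).1 hle₂
    have hinv : (y + w) * (y - w) = 1 := by nlinarith
    have hyw0 : 0 < y - w := by nlinarith
    have hyw1 : y - w ≤ 1 := by nlinarith
    have hexpneg : Real.exp (-A) ≤ 1 := Real.exp_le_one_iff.2 (by linarith)
    have hiE : Real.exp A * Real.exp (-A) = 1 := by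
      rw [← Real.exp_add]; simp
    have hprod : 0 ≤ (Real.exp A - (y + w)) * (1 - Real.exp (-A) * (y - w)) := by
      have h2 : Real.exp (-A) * (y - w) ≤ 1 :=
        mul_le_one₀ hexpneg hyw0.le hyw1
      exact mul_nonneg (by linarith) (by linarith)
    have hyA : y ≤ Real.cosh A := by
      rw [Real.cosh_eq]
      nlinarith [Real.exp_pos (-A), Real.exp_pos A]
    have hcosh : Real.cosh A ≤ Real.cosh 1 := by
      rw [Real.cosh_le_cosh, abs_of_nonneg hA0, abs_one]
      exact hA1
    calc Real.cos θ / Real.cos θs = y := by rw [hydef]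
      _ ≤ Real.cosh A := hyA
      _ ≤ Real.cosh 1 := hcosh


lemma Sig_ge {a m lam : ℝ} (ha : 0 < a) (ham : a < m) (hl0 : 0 ≤ lam) (hl1 : lam ≤ 1)
    {x : ℝ} (hx : m ≤ x) : x ^ 2 ≤ Sig a m x lam := by
  have hm : 0 < m := ha.trans ham
  have hx0 : 0 < x := lt_of_lt_of_le hm hx
  have hinner : (x ^ 2) ^ 2
      ≤ (x ^ 2 + a ^ 2) ^ 2 - a ^ 2 * lam * (x ^ 2 - 2 * m * x + a ^ 2) := by
    rcases le_or_gt (x ^ 2 - 2 * m * x + a ^ 2) 0 with h | h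
    · nlinarith [mul_nonneg (mul_nonneg (sq_nonneg a) hl0) (neg_nonneg.2 h)]
    · nlinarith [mul_nonneg (mul_nonneg (sq_nonneg a) (sub_nonneg.2 hl1)) h.le,
        mul_nonneg (mul_nonneg (sq_nonneg a) hm.le) hx0.le, sq_nonneg (a * x)]
  calc x ^ 2 = Real.sqrt ((x ^ 2) ^ 2) := (Real.sqrt_sq (sq_nonneg x)).symm
    _ ≤ Sig a m x lam := Real.sqrt_le_sqrt hinner

lemma radial_key {a m lam : ℝ} (ha : 0 < a) (ham : a < m) (hl0 : 0 ≤ lam) (hl1 : lam ≤ 1)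
    (lo hi : ℝ) (hlo : m ≤ lo) (hlohi : lo ≤ hi) :
    (∫ x in lo..hi, 1 / Sig a m x lam) ≤ 1 / m ∧
      0 ≤ ∫ x in lo..hi, 1 / Sig a m x lam := by
  have hm : 0 < m := ha.trans ham
  have hSpos : ∀ x ∈ Icc lo hi, 0 < Sig a m x lam := fun x hx =>
    lt_of_lt_of_le (by nlinarith [hx.1] : (0:ℝ) < x ^ 2)
      (Sig_ge ha ham hl0 hl1 (le_trans hlo hx.1))
  have hScont : Continuous (fun x => Sig a m x lam) := by
    unfold Sig
    fun_prop
  have hint1 : IntervalIntegrable (fun x => 1 / Sig a m x lam) volume lo hi := by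
    apply ContinuousOn.intervalIntegrable
    rw [uIcc_of_le hlohi]
    exact ContinuousOn.div continuousOn_const hScont.continuousOn
      (fun x hx => (hSpos x hx).ne')
  have hint2 : IntervalIntegrable (fun x : ℝ => 1 / x ^ 2) volume lo hi := by
    apply ContinuousOn.intervalIntegrable
    rw [uIcc_of_le hlohi]
    exact ContinuousOn.div continuousOn_const (continuous_pow 2).continuousOn
      (fun x hx => by nlinarith [hx.1])
  have hmono : (∫ x in lo..hi, 1 / Sig a m x lam) ≤ ∫ x in lo..hi, 1 / x ^ 2 :=
    integral_mono_on hlohi hint1 hint2 (fun x hx =>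
      one_div_le_one_div_of_le (by nlinarith [hx.1])
        (Sig_ge ha ham hl0 hl1 (le_trans hlo hx.1)))
  have hval : (∫ x in lo..hi, 1 / x ^ 2) = 1 / lo - 1 / hi := by
    have hd := integral_eq_sub_of_hasDerivAt (a := lo) (b := hi)
      (f := fun x => -x⁻¹) (f' := fun x : ℝ => 1 / x ^ 2) ?_ hint2
    · rw [hd]
      field_simp
      ring
    · intro x hx
      rw [uIcc_of_le hlohi] at hx
      have hxne : x ≠ 0 := by nlinarith [hx.1]
      simpa [one_div] using (hasDerivAt_inv hxne).fun_neg
  constructor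
  · rw [hval] at hmono
    have h1 : 1 / lo ≤ 1 / m := one_div_le_one_div_of_le hm hlo
    have h2 : 0 ≤ 1 / hi := one_div_nonneg.2 (by linarith)
    linarith
  · exact intervalIntegral.integral_nonneg hlohi (fun u hu =>
      div_nonneg zero_le_one ((hSpos u hu).le))

lemma radial_bound {a m r lam : ℝ} (ha : 0 < a) (ham : a < m) (hr : m ≤ r)
    (hl0 : 0 ≤ lam) (hl1 : lam ≤ 1) :
    Real.sign (r - rPlus a m) * (∫ x in (rPlus a m)..r, 1 / Sig a m x lam) ≤ 1 / m ∧
      0 ≤ Real.sign (r - rPlus a m) * ∫ x in (rPlus a m)..r, 1 / Sig a m x lam := by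
  have hm : 0 < m := ha.trans ham
  have hrp : m ≤ rPlus a m := le_add_of_nonneg_right (Real.sqrt_nonneg _)
  rcases lt_trichotomy r (rPlus a m) with h | h | h
  · have hs : Real.sign (r - rPlus a m) = -1 := Real.sign_of_neg (by linarith)
    have hsymm : (∫ x in (rPlus a m)..r, 1 / Sig a m x lam)
        = -∫ x in r..(rPlus a m), 1 / Sig a m x lam :=
      intervalIntegral.integral_symm _ _
    obtain ⟨h1, h2⟩ := radial_key ha ham hl0 hl1 r (rPlus a m) hr h.le
    rw [hs, hsymm]
    constructor <;> nlinarith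
  · rw [h]
    simp [hm.le]
  · have hs : Real.sign (r - rPlus a m) = 1 := Real.sign_of_pos (by linarith)
    obtain ⟨h1, h2⟩ := radial_key ha ham hl0 hl1 (rPlus a m) r hrp h.le
    rw [hs, one_mul]
    exact ⟨h1, h2⟩


/-- Uniform (in `a`, `m`) bound `sin θ*/sin θ + cos θ/cos θ* ≤ sec 1 + cosh 1`
for the (antipodally extended) Pretorius–Israel angle, for `r ≥ m`
(Lemma `est for ths` of the paper's appendix). -/
theorem thetaStar_ratio_bound (a m : ℝ) (ha : 0 < a) (ham : a < m)
    (θstar θE : ℝ → ℝ → ℝ)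
    (hθs : ∀ r ∈ Set.Ici (rMinus a m), ∀ θ ∈ Set.Ioo 0 (Real.pi / 2),
      θstar r θ ∈ Set.Ico θ (Real.pi / 2) ∧ Fker a m (θstar r θ) r θ = 0)
    (hE1 : ∀ r : ℝ, ∀ θ ∈ Set.Ioo 0 (Real.pi / 2), θE r θ = θstar r θ)
    (hE2 : ∀ r : ℝ, ∀ θ ∈ Set.Ioo (Real.pi / 2) Real.pi,
      θE r θ = Real.pi - θstar r (Real.pi - θ)) :
    ∀ r ∈ Set.Ici m, ∀ θ ∈ Set.Ioo 0 (Real.pi / 2) ∪ Set.Ioo (Real.pi / 2) Real.pi,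
      Real.sin (θE r θ) / Real.sin θ + Real.cos θ / Real.cos (θE r θ)
        ≤ 1 / Real.cos 1 + Real.cosh 1 := by
  have hm : 0 < m := ha.trans ham
  have hπ := Real.pi_gt_three
  have hcase : ∀ r, m ≤ r → ∀ θ ∈ Set.Ioo 0 (Real.pi / 2),
      Real.sin (θstar r θ) / Real.sin θ + Real.cos θ / Real.cos (θstar r θ)
        ≤ 1 / Real.cos 1 + Real.cosh 1 := by
    intro r hr θ hθ
    have hrm : r ∈ Set.Ici (rMinus a m) := by
      have h0 := Real.sqrt_nonneg (m ^ 2 - a ^ 2)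
      simp only [Set.mem_Ici, rMinus]
      linarith
    obtain ⟨hmem, hF⟩ := hθs r hrm θ hθ
    set θs := θstar r θ with hθsdef
    set A : ℝ := ∫ x in θ..θs, 1 / Real.sqrt (Real.sin θs ^ 2 - Real.sin x ^ 2) with hAdef
    have h1 : (∫ x in θ..θs, 1 / (a * Real.sqrt (Real.sin θs ^ 2 - Real.sin x ^ 2)))
        = a⁻¹ * A := by
      rw [hAdef, ← intervalIntegral.integral_const_mul]
      simp_rw [one_div, mul_inv]
    have hFk : -(a⁻¹ * A) + Real.sign (r - rPlus a m)
        * (∫ x in (rPlus a m)..r, 1 / Sig a m x (Real.sin θs ^ 2)) = 0 := by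
      have h2 := hF
      rw [Fker] at h2
      rwa [intervalIntegral.integral_symm, h1] at h2
    obtain ⟨hS1, hS0⟩ := radial_bound (lam := Real.sin θs ^ 2) (r := r) ha ham hr
      (sq_nonneg _) (Real.sin_sq_le_one _)
    have hA1 : A ≤ 1 := by
      have h3 : a⁻¹ * A ≤ 1 / m := by linarith
      have h4 := mul_le_mul_of_nonneg_left h3 ha.le
      rw [← mul_assoc, mul_inv_cancel₀ ha.ne', one_mul, mul_one_div] at h4
      have h5 : a / m < 1 := (div_lt_one hm).2 ham
      linarith
    obtain ⟨b1, b2⟩ := angular_core hθ.1 hmem.1 hmem.2 hAdef.symm hA1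
    exact add_le_add b1 b2
  intro r hr θ hθ
  rcases hθ with h1 | h2
  · rw [hE1 r θ h1]
    exact hcase r hr θ h1
  · rw [hE2 r θ h2]
    have hφ : Real.pi - θ ∈ Set.Ioo 0 (Real.pi / 2) :=
      ⟨by linarith [h2.2], by linarith [h2.1]⟩
    have h := hcase r hr (Real.pi - θ) hφ
    rw [Real.sin_pi_sub, Real.cos_pi_sub]
    have hsθ : Real.sin θ = Real.sin (Real.pi - θ) := by rw [Real.sin_pi_sub]
    have hcθ : Real.cos θ = -Real.cos (Real.pi - θ) := by rw [Real.cos_pi_sub]; ring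
    rw [hsθ, hcθ, neg_div_neg_eq]
    exact h
end

section
/- Let δ > 0 and r₀ ≥ 1. There exist ε* ∈ (0, 1) and C > 0, depending only on δ and r₀, such that for every 0 < ε ≤ ε*, every continuous h : [r₀, ∞) → ℝ with 0 ≤ h(r) ≤ ε²·r^{−5−δ} for all r ≥ r₀, and every φ₀ ∈ ℝ with |φ₀ − r₀| ≤ ε, there exists a unique C² function φ : [r₀, ∞) → ℝ satisfying φ″(r) + h(r)·φ(r) = 0 on [r₀, ∞), φ(r₀) = φ₀, and lim_{r→∞} φ(r)/r = 1. Moreover, sup_{r ≥ r₀} |φ(r) − r| ≤ 2ε and 1 ≤ φ′(r₀) ≤ 1 + C·ε². -/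
open MeasureTheory Set Filter intervalIntegral
open scoped NNReal ENNReal

lemma rpow_tail {δ a p : ℝ} (hδ : 0 < δ) (ha : 1 ≤ a) (hp : p ≤ -2 - δ) :
    IntegrableOn (fun s => s ^ p) (Ioi a) ∧ (∫ s in Ioi a, s ^ p) ≤ 1 := by
  have ha0 : (0:ℝ) < a := lt_of_lt_of_le one_pos ha
  have hp1 : p < -1 := by linarith
  refine ⟨integrableOn_Ioi_rpow_of_lt hp1 ha0, ?_⟩
  rw [integral_Ioi_rpow_of_lt hp1 ha0]
  have h1 : a ^ (p + 1) ≤ 1 :=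
    Real.rpow_le_one_of_one_le_of_nonpos ha (by linarith)
  have h2 : (0:ℝ) < -(p+1) := by linarith
  have he : -a ^ (p+1) / (p+1) = a ^ (p+1) / (-(p+1)) := by rw [div_neg, neg_div]
  rw [he, div_le_one h2]
  linarith

-- Helper 2: dominated tail bound
lemma tail_bound {δ a p c : ℝ} (hδ : 0 < δ) (ha : 1 ≤ a) (hp : p ≤ -2 - δ) (hc : 0 ≤ c)
    {g : ℝ → ℝ} (hm : AEStronglyMeasurable g (volume.restrict (Ioi a)))
    (hb : ∀ s ∈ Ioi a, |g s| ≤ c * s ^ p) :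
    IntegrableOn g (Ioi a) ∧ |∫ s in Ioi a, g s| ≤ c := by
  obtain ⟨hint, hval⟩ := rpow_tail hδ ha hp
  have hdom : IntegrableOn (fun s => c * s ^ p) (Ioi a) := hint.const_mul c
  have hgb : ∀ᵐ s ∂(volume.restrict (Ioi a)), ‖g s‖ ≤ c * s ^ p := by
    rw [ae_restrict_iff' measurableSet_Ioi]
    exact ae_of_all _ fun s hs => by simpa [Real.norm_eq_abs] using hb s hs
  have hgint : IntegrableOn g (Ioi a) := Integrable.mono' hdom hm hgb
  refine ⟨hgint, ?_⟩
  calc |∫ s in Ioi a, g s| ≤ ∫ s in Ioi a, c * s ^ p :=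
        norm_integral_le_of_norm_le hdom hgb
    _ = c * ∫ s in Ioi a, s ^ p := by rw [MeasureTheory.integral_const_mul]
    _ ≤ c * 1 := by exact mul_le_mul_of_nonneg_left hval hc
    _ = c := mul_one c


lemma split_Ioi {g : ℝ → ℝ} {a b : ℝ} (hab : a ≤ b) (hg : IntegrableOn g (Ioi a)) :
    ∫ s in Ioi a, g s = (∫ s in a..b, g s) + ∫ s in Ioi b, g s := by
  rw [intervalIntegral.integral_of_le hab, ← Ioc_union_Ioi_eq_Ioi hab,
    setIntegral_union (Ioc_disjoint_Ioi le_rfl) measurableSet_Ioi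
      (hg.mono_set Ioc_subset_Ioi_self) (hg.mono_set (Ioi_subset_Ioi hab))]

lemma primitive_hasDeriv {g : ℝ → ℝ} {r₀ : ℝ} (hg : ContinuousOn g (Ici r₀)) {r : ℝ}
    (hr : r₀ ≤ r) :
    HasDerivWithinAt (fun x => ∫ t in r₀..x, g t) (g r) (Ici r₀) r := by
  have hint : IntervalIntegrable g volume r₀ r :=
    (hg.mono (by rw [uIcc_of_le hr]; exact Icc_subset_Ici_self)).intervalIntegrable
  rcases eq_or_lt_of_le hr with rfl | hlt
  · have hmeas : StronglyMeasurableAtFilter g (nhdsWithin r₀ (Ioi r₀)) :=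
      ⟨Ioi r₀, self_mem_nhdsWithin,
        (hg.mono Ioi_subset_Ici_self).aestronglyMeasurable measurableSet_Ioi⟩
    have hb : ContinuousWithinAt g (Ioi r₀) r₀ :=
      (hg r₀ self_mem_Ici).mono Ioi_subset_Ici_self
    exact intervalIntegral.integral_hasDerivWithinAt_right hint hmeas hb
  · have hIci : Ici r₀ ∈ nhds r := Ici_mem_nhds hlt
    have hca : ContinuousAt g r := (hg r (le_of_lt hlt)).continuousAt hIci
    have hm : StronglyMeasurableAtFilter g (nhds r) :=
      ⟨Ici r₀, hIci, hg.aestronglyMeasurable measurableSet_Ici⟩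
    exact (intervalIntegral.integral_hasDerivAt_right hint hm hca).hasDerivWithinAt

structure BVPData (δ r₀ ε : ℝ) (h : ℝ → ℝ) : Prop where
  hδ : 0 < δ
  hr₀ : 1 ≤ r₀
  hε : 0 < ε
  hε4 : ε ≤ 1/4
  hc : ContinuousOn h (Set.Ici r₀)
  hh : ∀ r ∈ Set.Ici r₀, 0 ≤ h r ∧ h r ≤ ε ^ 2 * r ^ (-5 - δ)

namespace BVPData
variable {δ r₀ ε : ℝ} {h : ℝ → ℝ} (D : BVPData δ r₀ ε h)
include D

lemma eps_sq : ε ^ 2 ≤ 1/16 := by nlinarith [D.hε, D.hε4]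

lemma k_bound {u : ℝ → ℝ} (hu : ∀ s, |u s| ≤ 2 * ε) {s : ℝ} (hs : r₀ ≤ s) :
    |h s * (s + u s)| ≤ 2 * ε ^ 2 * s ^ (-4 - δ) := by
  have hs1 : (1:ℝ) ≤ s := le_trans D.hr₀ hs
  have hs0 : (0:ℝ) < s := lt_of_lt_of_le one_pos hs1
  obtain ⟨hh0, hh1⟩ := D.hh s hs
  have hub : |s + u s| ≤ 2 * s := by
    have := hu s
    have h2e : 2 * ε ≤ 1 := by linarith [D.hε4]
    rw [abs_le] at this ⊢
    constructor <;> nlinarith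
  have : |h s * (s + u s)| = h s * |s + u s| := by
    rw [abs_mul, abs_of_nonneg hh0]
  rw [this]
  calc h s * |s + u s| ≤ (ε ^ 2 * s ^ (-5 - δ)) * (2 * s) := by
        apply mul_le_mul hh1 hub (abs_nonneg _)
        positivity
    _ = 2 * ε ^ 2 * (s ^ (-5 - δ) * s) := by ring
    _ = 2 * ε ^ 2 * s ^ (-4 - δ) := by
        rw [← Real.rpow_add_one (ne_of_gt hs0)]
        ring_nf

lemma k_nonneg {u : ℝ → ℝ} (hu : ∀ s, |u s| ≤ 2 * ε) {s : ℝ} (hs : r₀ ≤ s) :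
    0 ≤ h s * (s + u s) := by
  have hs1 : (1:ℝ) ≤ s := le_trans D.hr₀ hs
  have h2e : 2 * ε ≤ 1 := by linarith [D.hε4, D.hε]
  have := abs_le.1 (hu s)
  exact mul_nonneg (D.hh s hs).1 (by linarith)

lemma k_contOn {u : ℝ → ℝ} (huc : Continuous u) :
    ContinuousOn (fun s => h s * (s + u s)) (Set.Ici r₀) :=
  D.hc.mul ((continuous_id.add huc).continuousOn)

lemma k_aesm {u : ℝ → ℝ} (huc : Continuous u) {r : ℝ} (hr : r₀ ≤ r) :
    AEStronglyMeasurable (fun s => h s * (s + u s)) (volume.restrict (Set.Ioi r)) :=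
  ((D.k_contOn huc).mono (fun s hs => le_trans hr (le_of_lt hs))).aestronglyMeasurable
    measurableSet_Ioi

end BVPData

noncomputable def Fint (h u : ℝ → ℝ) (r : ℝ) : ℝ := ∫ s in Set.Ioi r, h s * (s + u s)
noncomputable def Gint (h u : ℝ → ℝ) (r : ℝ) : ℝ := ∫ s in Set.Ioi r, (s - r) * (h s * (s + u s))
noncomputable def Hint (h u : ℝ → ℝ) (r : ℝ) : ℝ := ∫ s in Set.Ioi r, s * (h s * (s + u s))

namespace BVPData
variable {δ r₀ ε : ℝ} {h : ℝ → ℝ} (D : BVPData δ r₀ ε h)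
include D

lemma F_int {u : ℝ → ℝ} (hu : ∀ s, |u s| ≤ 2 * ε) (huc : Continuous u) {r : ℝ} (hr : r₀ ≤ r) :
    IntegrableOn (fun s => h s * (s + u s)) (Set.Ioi r) ∧ |Fint h u r| ≤ 2 * ε ^ 2 := by
  have h1r : (1:ℝ) ≤ r := le_trans D.hr₀ hr
  exact tail_bound D.hδ h1r (by linarith [D.hδ] : -4 - δ ≤ -2 - δ) (by positivity)
    (D.k_aesm huc hr) (fun s hs => D.k_bound hu (le_trans hr (le_of_lt hs)))

lemma H_int {u : ℝ → ℝ} (hu : ∀ s, |u s| ≤ 2 * ε) (huc : Continuous u) {r : ℝ} (hr : r₀ ≤ r) :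
    IntegrableOn (fun s => s * (h s * (s + u s))) (Set.Ioi r) ∧ |Hint h u r| ≤ 2 * ε ^ 2 := by
  have h1r : (1:ℝ) ≤ r := le_trans D.hr₀ hr
  refine tail_bound D.hδ h1r (by linarith [D.hδ] : -3 - δ ≤ -2 - δ) (by positivity)
    (continuous_id.continuousOn.aestronglyMeasurable measurableSet_Ioi |>.mul (D.k_aesm huc hr))
    (fun s hs => ?_)
  have hs0 : (0:ℝ) < s := lt_of_lt_of_le one_pos (le_trans h1r (le_of_lt hs))
  calc |s * (h s * (s + u s))| = s * |h s * (s + u s)| := by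
        rw [abs_mul, abs_of_nonneg hs0.le]
    _ ≤ s * (2 * ε ^ 2 * s ^ (-4 - δ)) := by
        exact mul_le_mul_of_nonneg_left (D.k_bound hu (le_trans hr (le_of_lt hs))) hs0.le
    _ = 2 * ε ^ 2 * (s ^ (-4 - δ) * s) := by ring
    _ = 2 * ε ^ 2 * s ^ (-3 - δ) := by
        rw [← Real.rpow_add_one (ne_of_gt hs0)]; ring_nf

lemma G_int {u : ℝ → ℝ} (hu : ∀ s, |u s| ≤ 2 * ε) (huc : Continuous u) {r : ℝ} (hr : r₀ ≤ r) :
    IntegrableOn (fun s => (s - r) * (h s * (s + u s))) (Set.Ioi r) ∧ |Gint h u r| ≤ 2 * ε ^ 2 := by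
  have h1r : (1:ℝ) ≤ r := le_trans D.hr₀ hr
  refine tail_bound D.hδ h1r (by linarith [D.hδ] : -3 - δ ≤ -2 - δ) (by positivity)
    (((continuous_id.sub continuous_const).continuousOn.aestronglyMeasurable
      measurableSet_Ioi).mul (D.k_aesm huc hr))
    (fun s hs => ?_)
  have hs0 : (0:ℝ) < s := lt_of_lt_of_le one_pos (le_trans h1r (le_of_lt hs))
  have hsr : 0 ≤ s - r := by linarith [le_of_lt (show r < s from hs)]
  calc |(s - r) * (h s * (s + u s))| = (s - r) * |h s * (s + u s)| := by
        rw [abs_mul, abs_of_nonneg hsr]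
    _ ≤ s * (2 * ε ^ 2 * s ^ (-4 - δ)) := by
        apply mul_le_mul (by linarith [h1r.trans hs.le] : s - r ≤ s)
          (D.k_bound hu (le_trans hr (le_of_lt hs))) (abs_nonneg _) hs0.le
    _ = 2 * ε ^ 2 * (s ^ (-4 - δ) * s) := by ring
    _ = 2 * ε ^ 2 * s ^ (-3 - δ) := by
        rw [← Real.rpow_add_one (ne_of_gt hs0)]; ring_nf

lemma G_diff {u v : ℝ → ℝ} (hu : ∀ s, |u s| ≤ 2 * ε) (huc : Continuous u)
    (hv : ∀ s, |v s| ≤ 2 * ε) (hvc : Continuous v) {Dd : ℝ} (hDd : 0 ≤ Dd)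
    (hduv : ∀ s, |u s - v s| ≤ Dd) {r : ℝ} (hr : r₀ ≤ r) :
    |Gint h u r - Gint h v r| ≤ ε ^ 2 * Dd := by
  have h1r : (1:ℝ) ≤ r := le_trans D.hr₀ hr
  have hui := (D.G_int hu huc hr).1
  have hvi := (D.G_int hv hvc hr).1
  have heq : Gint h u r - Gint h v r
      = ∫ s in Set.Ioi r, ((s - r) * (h s * (s + u s)) - (s - r) * (h s * (s + v s))) := by
    rw [integral_sub hui hvi]; rfl
  rw [heq]
  refine (tail_bound D.hδ h1r (by linarith [D.hδ] : -4 - δ ≤ -2 - δ) (by positivity)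
    (hui.aestronglyMeasurable.sub hvi.aestronglyMeasurable) (fun s hs => ?_)).2
  have hsr₀ : r₀ ≤ s := le_trans hr (le_of_lt hs)
  have hs0 : (0:ℝ) < s := lt_of_lt_of_le one_pos (le_trans h1r (le_of_lt hs))
  have hsr : 0 ≤ s - r := by linarith [le_of_lt (show r < s from hs)]
  obtain ⟨hh0, hh1⟩ := D.hh s hsr₀
  calc |(s - r) * (h s * (s + u s)) - (s - r) * (h s * (s + v s))|
      = (s - r) * (h s * |u s - v s|) := by
        rw [show (s - r) * (h s * (s + u s)) - (s - r) * (h s * (s + v s))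
          = (s - r) * (h s * (u s - v s)) by ring, abs_mul, abs_mul,
          abs_of_nonneg hsr, abs_of_nonneg hh0]
    _ ≤ s * ((ε ^ 2 * s ^ (-5 - δ)) * Dd) := by
        apply mul_le_mul (by linarith : s - r ≤ s)
          (mul_le_mul hh1 (hduv s) (abs_nonneg _) (by positivity))
          (mul_nonneg hh0 (abs_nonneg _)) hs0.le
    _ = (ε ^ 2 * Dd) * (s ^ (-5 - δ) * s) := by ring
    _ = (ε ^ 2 * Dd) * s ^ (-4 - δ) := by
        rw [← Real.rpow_add_one (ne_of_gt hs0)]; ring_nf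

end BVPData

namespace BVPData
variable {δ r₀ ε : ℝ} {h : ℝ → ℝ} (D : BVPData δ r₀ ε h)
include D

lemma F_eq {u : ℝ → ℝ} (hu : ∀ s, |u s| ≤ 2 * ε) (huc : Continuous u) {r : ℝ} (hr : r₀ ≤ r) :
    Fint h u r = Fint h u r₀ - ∫ s in r₀..r, h s * (s + u s) := by
  have := split_Ioi hr ((D.F_int hu huc le_rfl).1)
  unfold Fint at *; linarith

lemma H_eq {u : ℝ → ℝ} (hu : ∀ s, |u s| ≤ 2 * ε) (huc : Continuous u) {r : ℝ} (hr : r₀ ≤ r) :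
    Hint h u r = Hint h u r₀ - ∫ s in r₀..r, s * (h s * (s + u s)) := by
  have := split_Ioi hr ((D.H_int hu huc le_rfl).1)
  unfold Hint at *; linarith

lemma G_eq {u : ℝ → ℝ} (hu : ∀ s, |u s| ≤ 2 * ε) (huc : Continuous u) {r : ℝ} (hr : r₀ ≤ r) :
    Gint h u r = Hint h u r - r * Fint h u r := by
  have h1 := (D.H_int hu huc hr).1
  have h2 := (D.F_int hu huc hr).1
  unfold Gint Hint Fint
  rw [← MeasureTheory.integral_const_mul r, ← integral_sub h1 (h2.const_mul r)]
  exact integral_congr_ae (Filter.Eventually.of_forall fun s => by ring)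

lemma F_hasDeriv {u : ℝ → ℝ} (hu : ∀ s, |u s| ≤ 2 * ε) (huc : Continuous u) {r : ℝ}
    (hr : r₀ ≤ r) :
    HasDerivWithinAt (Fint h u) (-(h r * (r + u r))) (Set.Ici r₀) r := by
  have hQ : HasDerivWithinAt (fun x => ∫ t in r₀..x, h t * (t + u t)) (h r * (r + u r))
      (Set.Ici r₀) r := primitive_hasDeriv (D.k_contOn huc) hr
  have base : HasDerivWithinAt (fun x => Fint h u r₀ - ∫ t in r₀..x, h t * (t + u t))
      (0 - h r * (r + u r)) (Set.Ici r₀) r :=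
    (hasDerivWithinAt_const r _ (Fint h u r₀)).sub hQ
  rw [zero_sub] at base
  exact base.congr (fun x hx => D.F_eq hu huc hx) (D.F_eq hu huc hr)

lemma G_hasDeriv {u : ℝ → ℝ} (hu : ∀ s, |u s| ≤ 2 * ε) (huc : Continuous u) {r : ℝ}
    (hr : r₀ ≤ r) :
    HasDerivWithinAt (Gint h u) (-(Fint h u r)) (Set.Ici r₀) r := by
  have hkc : ContinuousOn (fun s => h s * (s + u s)) (Set.Ici r₀) := D.k_contOn huc
  have hskc : ContinuousOn (fun s => s * (h s * (s + u s))) (Set.Ici r₀) :=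
    continuousOn_id.mul hkc
  have hP : HasDerivWithinAt (fun x => ∫ t in r₀..x, t * (h t * (t + u t)))
      (r * (h r * (r + u r))) (Set.Ici r₀) r := primitive_hasDeriv hskc hr
  have hQ : HasDerivWithinAt (fun x => ∫ t in r₀..x, h t * (t + u t)) (h r * (r + u r))
      (Set.Ici r₀) r := primitive_hasDeriv hkc hr
  have d1 : HasDerivWithinAt (fun x => Hint h u r₀ - ∫ t in r₀..x, t * (h t * (t + u t)))
      (0 - r * (h r * (r + u r))) (Set.Ici r₀) r :=
    (hasDerivWithinAt_const r _ (Hint h u r₀)).sub hP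
  have d2' : HasDerivWithinAt (fun x => Fint h u r₀ - ∫ t in r₀..x, h t * (t + u t))
      (0 - h r * (r + u r)) (Set.Ici r₀) r :=
    (hasDerivWithinAt_const r _ (Fint h u r₀)).sub hQ
  have d2 : HasDerivWithinAt
      (fun x => x * (Fint h u r₀ - ∫ t in r₀..x, h t * (t + u t)))
      (1 * (Fint h u r₀ - ∫ t in r₀..r, h t * (t + u t)) +
        r * (0 - h r * (r + u r))) (Set.Ici r₀) r :=
    (hasDerivWithinAt_id r _).mul d2'
  have base := d1.sub d2
  have hFr := D.F_eq hu huc hr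
  have base' : HasDerivWithinAt
      (fun x => (Hint h u r₀ - ∫ t in r₀..x, t * (h t * (t + u t))) -
        x * (Fint h u r₀ - ∫ t in r₀..x, h t * (t + u t)))
      (-(Fint h u r)) (Set.Ici r₀) r := by
    refine base.congr_deriv ?_
    rw [hFr]; ring
  refine base'.congr (fun x hx => ?_) ?_
  · rw [D.G_eq hu huc hx, D.H_eq hu huc hx, D.F_eq hu huc hx]
  · rw [D.G_eq hu huc hr, D.H_eq hu huc hr, hFr]

lemma G_contOn {u : ℝ → ℝ} (hu : ∀ s, |u s| ≤ 2 * ε) (huc : Continuous u) :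
    ContinuousOn (Gint h u) (Set.Ici r₀) :=
  fun r hr => (D.G_hasDeriv hu huc hr).continuousWithinAt

end BVPData

section
variable {δ r₀ ε : ℝ} {h : ℝ → ℝ}

variable (hδ : 0 < δ) (hr₀ : 1 ≤ r₀) (hε : 0 < ε) (hε4 : ε ≤ 1/4)
  (hc : ContinuousOn h (Set.Ici r₀))
  (hh : ∀ r ∈ Set.Ici r₀, 0 ≤ h r ∧ h r ≤ ε ^ 2 * r ^ (-5 - δ))

include hδ hr₀ hε hε4 hc hh in
lemma bvp_unique' (φ ψ : ℝ → ℝ)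
    (hφ1 : ∀ r ∈ Set.Ici r₀, HasDerivWithinAt φ (derivWithin φ (Set.Ici r₀) r) (Set.Ici r₀) r)
    (hφ2 : ∀ r ∈ Set.Ici r₀, HasDerivWithinAt (fun s => derivWithin φ (Set.Ici r₀) s)
      (-(h r * φ r)) (Set.Ici r₀) r)
    (hψ1 : ∀ r ∈ Set.Ici r₀, HasDerivWithinAt ψ (derivWithin ψ (Set.Ici r₀) r) (Set.Ici r₀) r)
    (hψ2 : ∀ r ∈ Set.Ici r₀, HasDerivWithinAt (fun s => derivWithin ψ (Set.Ici r₀) s)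
      (-(h r * ψ r)) (Set.Ici r₀) r)
    (hval : ψ r₀ = φ r₀)
    (hφt : Filter.Tendsto (fun r => φ r / r) Filter.atTop (nhds 1))
    (hψt : Filter.Tendsto (fun r => ψ r / r) Filter.atTop (nhds 1)) :
    ∀ r ∈ Set.Ici r₀, ψ r = φ r := by
  set w : ℝ → ℝ := fun r => ψ r - φ r with hw_def
  set w' : ℝ → ℝ := fun r => derivWithin ψ (Set.Ici r₀) r - derivWithin φ (Set.Ici r₀) r
    with hw'_def
  have hw' : ∀ r ∈ Set.Ici r₀, HasDerivWithinAt w (w' r) (Set.Ici r₀) r :=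
    fun r hr => (hψ1 r hr).sub (hφ1 r hr)
  have hw'' : ∀ r ∈ Set.Ici r₀, HasDerivWithinAt w' (-(h r * w r)) (Set.Ici r₀) r := by
    intro r hr
    have := (hψ2 r hr).sub (hφ2 r hr)
    refine this.congr_deriv ?_
    simp only [hw_def]; ring
  have hwc : ContinuousOn w (Set.Ici r₀) := fun r hr => (hw' r hr).continuousWithinAt
  have hw'c : ContinuousOn w' (Set.Ici r₀) := fun r hr => (hw'' r hr).continuousWithinAt
  have hw0 : w r₀ = 0 := by simp [hw_def, hval]
  have hwt : Filter.Tendsto (fun r => w r / r) Filter.atTop (nhds 0) := by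
    have := hψt.sub hφt
    rw [sub_self] at this
    refine this.congr fun r => ?_
    simp [hw_def, sub_div]
  -- positivity of points in Ici r₀
  have hpos : ∀ r ∈ Set.Ici r₀, (0:ℝ) < r := fun r hr => lt_of_lt_of_le one_pos (hr₀.trans hr)
  -- linear bound on w
  obtain ⟨R, hR⟩ : ∃ R, ∀ r ≥ R, |w r / r| < 1 := by
    have hev : ∀ᶠ r in Filter.atTop, |w r / r| < 1 := by
      have := Metric.tendsto_nhds.mp hwt 1 one_pos
      refine this.mono fun r hr => ?_
      rwa [Real.dist_eq, sub_zero] at hr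
    exact hev.exists_forall_of_atTop
  obtain ⟨M, hM⟩ := (isCompact_Icc (a := r₀) (b := max R r₀)).exists_bound_of_continuousOn
    (hwc.mono Set.Icc_subset_Ici_self)
  have hB : ∀ r ∈ Set.Ici r₀, |w r| ≤ (max M 1) * r := by
    intro r hr
    have hr0 := hpos r hr
    have hr1 : (1:ℝ) ≤ r := hr₀.trans hr
    by_cases hle : r ≤ max R r₀
    · have := hM r ⟨hr, hle⟩
      rw [Real.norm_eq_abs] at this
      calc |w r| ≤ M := this
        _ ≤ max M 1 := le_max_left _ _
        _ = (max M 1) * 1 := (mul_one _).symm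
        _ ≤ (max M 1) * r := by
            apply mul_le_mul_of_nonneg_left hr1
            exact le_trans zero_le_one (le_max_right _ _)
    · push_neg at hle
      have hrR : r ≥ R := le_of_lt (lt_of_le_of_lt (le_max_left _ _) hle)
      have := le_of_lt (hR r hrR)
      rw [abs_div, abs_of_pos hr0, div_le_one hr0] at this
      calc |w r| ≤ r := this
        _ = 1 * r := (one_mul r).symm
        _ ≤ (max M 1) * r := mul_le_mul_of_nonneg_right (le_max_right _ _) hr0.le
  -- sup of |w r|/r
  set A : Set ℝ := (fun r => |w r| / r) '' Set.Ici r₀ with hA_def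
  have hAne : A.Nonempty := ⟨_, ⟨r₀, Set.self_mem_Ici, rfl⟩⟩
  have hAbdd : BddAbove A := by
    refine ⟨max M 1, ?_⟩
    rintro x ⟨r, hr, rfl⟩
    exact (div_le_iff₀ (hpos r hr)).mpr (hB r hr)
  set K : ℝ := sSup A with hK_def
  have hK0 : 0 ≤ K := by
    have h1 : |w r₀| / r₀ ≤ K := le_csSup hAbdd ⟨r₀, Set.self_mem_Ici, rfl⟩
    have h2 : 0 ≤ |w r₀| / r₀ := div_nonneg (abs_nonneg _) (hpos r₀ Set.self_mem_Ici).le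
    linarith
  have hKw : ∀ r ∈ Set.Ici r₀, |w r| ≤ K * r := by
    intro r hr
    have := le_csSup hAbdd (⟨r, hr, rfl⟩ : |w r| / r ∈ A)
    exact (div_le_iff₀ (hpos r hr)).mp this
  set α : ℝ := w' r₀ with hα_def
  -- the rpow tail
  have hr₀0 : (0:ℝ) < r₀ := lt_of_lt_of_le one_pos hr₀
  obtain ⟨htail_int, htail_val⟩ :=
    rpow_tail hδ hr₀ (show (-4 - δ : ℝ) ≤ -2 - δ by linarith)
  -- FTC for w'
  have key : ∀ r ∈ Set.Ici r₀, |w' r - α| ≤ K * ε ^ 2 := by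
    intro r hr
    have hr' : r₀ ≤ r := hr
    have hcont_int : ContinuousOn (fun s => -(h s * w s)) (Set.Ici r₀) := (hc.mul hwc).neg
    have hIcc : Set.Icc r₀ r ⊆ Set.Ici r₀ := Set.Icc_subset_Ici_self
    have hftc : ∫ s in r₀..r, -(h s * w s) = w' r - w' r₀ := by
      apply intervalIntegral.integral_eq_sub_of_hasDeriv_right_of_le hr'
        (hw'c.mono hIcc)
        (fun x hx => (hw'' x (le_of_lt hx.1)).mono fun y hy => (le_of_lt hx.1).trans (le_of_lt hy))
        ((hcont_int.mono (by rw [Set.uIcc_of_le hr']; exact hIcc)).intervalIntegrable)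
    rw [← hα_def] at hftc
    rw [← hftc]
    -- bound the integral
    have hbound : ∀ s ∈ Set.Icc r₀ r, |-(h s * w s)| ≤ K * ε ^ 2 * s ^ (-4 - δ) := by
      intro s hs
      have hs₀ : r₀ ≤ s := hs.1
      have hs0 : (0:ℝ) < s := hpos s hs₀
      obtain ⟨hh0, hh1⟩ := hh s hs₀
      calc |-(h s * w s)| = h s * |w s| := by rw [abs_neg, abs_mul, abs_of_nonneg hh0]
        _ ≤ (ε ^ 2 * s ^ (-5 - δ)) * (K * s) :=
            mul_le_mul hh1 (hKw s hs₀) (abs_nonneg _) (by positivity)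
        _ = K * ε ^ 2 * (s ^ (-5 - δ) * s) := by ring
        _ = K * ε ^ 2 * s ^ (-4 - δ) := by
            rw [← Real.rpow_add_one (ne_of_gt hs0)]; ring_nf
    have hrpowc : ContinuousOn (fun s : ℝ => K * ε ^ 2 * s ^ (-4 - δ)) (Set.Icc r₀ r) := by
      apply ContinuousOn.mul continuousOn_const
      apply ContinuousOn.rpow_const continuousOn_id
      intro x hx
      exact Or.inl (ne_of_gt (hpos x hx.1))
    calc |∫ s in r₀..r, -(h s * w s)| ≤ ∫ s in r₀..r, |-(h s * w s)| := by
          have hni := intervalIntegral.norm_integral_le_integral_norm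
            (f := fun s => -(h s * w s)) (a := r₀) (b := r) (μ := volume) hr'
          simp only [Real.norm_eq_abs] at hni
          exact hni
      _ ≤ ∫ s in r₀..r, K * ε ^ 2 * s ^ (-4 - δ) := by
          apply intervalIntegral.integral_mono_on hr'
            ((hcont_int.mono (by rw [Set.uIcc_of_le hr']; exact hIcc)).intervalIntegrable).abs
            (hrpowc.intervalIntegrable_of_Icc hr')
          exact hbound
      _ = K * ε ^ 2 * ∫ s in r₀..r, s ^ (-4 - δ) := by
          rw [intervalIntegral.integral_const_mul]
      _ ≤ K * ε ^ 2 * 1 := by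
          apply mul_le_mul_of_nonneg_left _ (by positivity)
          rw [intervalIntegral.integral_of_le hr']
          refine le_trans (setIntegral_mono_set htail_int ?_ ?_) htail_val
          · filter_upwards [ae_restrict_mem measurableSet_Ioi] with s hs
            exact Real.rpow_nonneg (le_of_lt (lt_trans hr₀0 hs)) _
          · exact HasSubset.Subset.eventuallyLE Set.Ioc_subset_Ioi_self
      _ = K * ε ^ 2 := mul_one _
  -- FTC for w
  have hw_lin : ∀ r ∈ Set.Ici r₀, |w r - α * (r - r₀)| ≤ K * ε ^ 2 * (r - r₀) := by
    intro r hr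
    have hr' : r₀ ≤ r := hr
    have hIcc : Set.Icc r₀ r ⊆ Set.Ici r₀ := Set.Icc_subset_Ici_self
    have hw'int : IntervalIntegrable w' volume r₀ r :=
      (hw'c.mono (by rw [Set.uIcc_of_le hr']; exact hIcc)).intervalIntegrable
    have hftc : ∫ s in r₀..r, w' s = w r - w r₀ := by
      apply intervalIntegral.integral_eq_sub_of_hasDeriv_right_of_le hr'
        (hwc.mono hIcc)
        (fun x hx => (hw' x (le_of_lt hx.1)).mono fun y hy => (le_of_lt hx.1).trans (le_of_lt hy))
        hw'int
    have hsub : ∫ s in r₀..r, (w' s - α) = w r - α * (r - r₀) := by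
      rw [intervalIntegral.integral_sub hw'int intervalIntegrable_const, hftc,
        intervalIntegral.integral_const, hw0, smul_eq_mul]
      ring
    rw [← hsub]
    have := intervalIntegral.norm_integral_le_of_norm_le_const
      (C := K * ε ^ 2) (f := fun s => w' s - α) (a := r₀) (b := r) ?_
    · rw [Real.norm_eq_abs] at this
      calc |∫ s in r₀..r, (w' s - α)| ≤ K * ε ^ 2 * |r - r₀| := this
        _ = K * ε ^ 2 * (r - r₀) := by rw [abs_of_nonneg (by linarith)]
    · intro x hx
      rw [Set.uIoc_of_le hr'] at hx
      rw [Real.norm_eq_abs]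
      exact key x (le_of_lt hx.1)
  -- limit argument: |α| ≤ K ε²
  have hα_le : |α| ≤ K * ε ^ 2 := by
    have t1 : Filter.Tendsto (fun r : ℝ => |α * ((r - r₀) / r)|) Filter.atTop (nhds |α|) := by
      have base : Filter.Tendsto (fun r : ℝ => (r - r₀) / r) Filter.atTop (nhds 1) := by
        have h0 : Filter.Tendsto (fun r : ℝ => 1 - r₀ * r⁻¹) Filter.atTop
            (nhds (1 - r₀ * 0)) :=
          tendsto_const_nhds.sub (tendsto_const_nhds.mul tendsto_inv_atTop_zero)
        rw [mul_zero, sub_zero] at h0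
        refine h0.congr' ?_
        filter_upwards [Filter.eventually_ge_atTop (1:ℝ)] with r hr1
        have hr0 : r ≠ 0 := by positivity
        field_simp
      have tmul : Filter.Tendsto (fun r : ℝ => α * ((r - r₀) / r)) Filter.atTop
          (nhds (α * 1)) := base.const_mul α
      rw [mul_one] at tmul
      exact tmul.abs
    have t2 : Filter.Tendsto (fun r : ℝ => |w r| / r + K * ε ^ 2) Filter.atTop
        (nhds (0 + K * ε ^ 2)) := by
      apply Filter.Tendsto.add _ tendsto_const_nhds
      have := hwt.abs
      rw [abs_zero] at this
      refine this.congr' ?_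
      filter_upwards [Filter.eventually_gt_atTop (0:ℝ)] with r hr0
      rw [abs_div, abs_of_pos hr0]
    rw [zero_add] at t2
    refine le_of_tendsto_of_tendsto t1 t2 ?_
    filter_upwards [Filter.eventually_ge_atTop r₀] with r hr
    have hr0 := hpos r hr
    have h1 : |α * (r - r₀)| ≤ |w r| + K * ε ^ 2 * (r - r₀) := by
      calc |α * (r - r₀)| = |w r - (w r - α * (r - r₀))| := by congr 1; ring
        _ ≤ |w r| + |w r - α * (r - r₀)| := abs_sub _ _
        _ ≤ |w r| + K * ε ^ 2 * (r - r₀) := by linarith [hw_lin r hr]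
    have h2 : |α * (r - r₀)| ≤ |w r| + K * ε ^ 2 * r := by
      have : K * ε ^ 2 * (r - r₀) ≤ K * ε ^ 2 * r := by nlinarith [mul_nonneg (mul_nonneg hK0 (sq_nonneg ε)) hr₀0.le]
      linarith
    calc |α * ((r - r₀) / r)| = |α * (r - r₀)| / r := by
          rw [← mul_div_assoc, abs_div, abs_of_pos hr0]
      _ ≤ (|w r| + K * ε ^ 2 * r) / r := by gcongr
      _ = |w r| / r + K * ε ^ 2 := by
          rw [add_div, mul_div_assoc, div_self hr0.ne', mul_one]
  -- conclude K = 0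
  have hfinal : ∀ r ∈ Set.Ici r₀, |w r| ≤ 2 * (K * ε ^ 2) * r := by
    intro r hr
    have hr' : r₀ ≤ r := hr
    have hr0 := hpos r hr
    have hb1 : |w r| ≤ |α| * (r - r₀) + K * ε ^ 2 * (r - r₀) := by
      calc |w r| = |α * (r - r₀) + (w r - α * (r - r₀))| := by congr 1; ring
        _ ≤ |α * (r - r₀)| + |w r - α * (r - r₀)| := abs_add_le _ _
        _ = |α| * (r - r₀) + |w r - α * (r - r₀)| := by
            rw [abs_mul, abs_of_nonneg (by linarith : (0:ℝ) ≤ r - r₀)]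
        _ ≤ |α| * (r - r₀) + K * ε ^ 2 * (r - r₀) := by linarith [hw_lin r hr]
    have hb2 : |α| * (r - r₀) ≤ K * ε ^ 2 * r := by
      have h1 : |α| * (r - r₀) ≤ K * ε ^ 2 * (r - r₀) :=
        mul_le_mul_of_nonneg_right hα_le (by linarith)
      have h2 : K * ε ^ 2 * (r - r₀) ≤ K * ε ^ 2 * r := by nlinarith [mul_nonneg (mul_nonneg hK0 (sq_nonneg ε)) hr₀0.le]
      linarith
    have hb3 : K * ε ^ 2 * (r - r₀) ≤ K * ε ^ 2 * r := by nlinarith [mul_nonneg (mul_nonneg hK0 (sq_nonneg ε)) hr₀0.le]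
    linarith
  have hKle : K ≤ 2 * (K * ε ^ 2) := by
    apply csSup_le hAne
    rintro x ⟨r, hr, rfl⟩
    rw [div_le_iff₀ (hpos r hr)]
    exact hfinal r hr
  have hesq : ε ^ 2 ≤ 1/16 := by nlinarith
  have hKz : K = 0 := by
    have : K * ε ^ 2 ≤ K * (1/16) := mul_le_mul_of_nonneg_left hesq hK0
    linarith
  intro r hr
  have := hKw r hr
  rw [hKz, zero_mul] at this
  have hwz : w r = 0 := abs_nonpos_iff.mp this
  have : ψ r - φ r = 0 := hwz
  linarith
end


/-- The two-point boundary value problem `φ″ + hφ = 0` on `[r₀, ∞)` with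
`φ(r₀) = φ₀` and `φ(r)/r → 1` at infinity, solved by a Banach fixed point
argument (Lemma `Apx:Lem:hatg1` of the paper): for small perturbations it has
a unique C² solution, which stays `2ε`-close to `r` and whose initial slope
satisfies `1 ≤ φ′(r₀) ≤ 1 + Cε²`. -/
theorem two_point_bvp (δ r₀ : ℝ) (hδ : 0 < δ) (hr₀ : 1 ≤ r₀) :
    ∃ εs ∈ Set.Ioo (0 : ℝ) 1, ∃ C : ℝ, 0 < C ∧
      ∀ ε : ℝ, 0 < ε → ε ≤ εs →
      ∀ h : ℝ → ℝ, ContinuousOn h (Set.Ici r₀) →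
        (∀ r ∈ Set.Ici r₀, 0 ≤ h r ∧ h r ≤ ε ^ 2 * r ^ (-5 - δ)) →
      ∀ φ₀ : ℝ, |φ₀ - r₀| ≤ ε →
      ∃ φ : ℝ → ℝ,
        ((∀ r ∈ Set.Ici r₀,
            HasDerivWithinAt φ (derivWithin φ (Set.Ici r₀) r) (Set.Ici r₀) r) ∧
         (∀ r ∈ Set.Ici r₀,
            HasDerivWithinAt (fun s => derivWithin φ (Set.Ici r₀) s)
              (-(h r * φ r)) (Set.Ici r₀) r) ∧
         φ r₀ = φ₀ ∧
         Filter.Tendsto (fun r => φ r / r) Filter.atTop (nhds 1)) ∧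
        (∀ ψ : ℝ → ℝ,
          ((∀ r ∈ Set.Ici r₀,
              HasDerivWithinAt ψ (derivWithin ψ (Set.Ici r₀) r) (Set.Ici r₀) r) ∧
           (∀ r ∈ Set.Ici r₀,
              HasDerivWithinAt (fun s => derivWithin ψ (Set.Ici r₀) s)
                (-(h r * ψ r)) (Set.Ici r₀) r) ∧
           ψ r₀ = φ₀ ∧
           Filter.Tendsto (fun r => ψ r / r) Filter.atTop (nhds 1)) →
          ∀ r ∈ Set.Ici r₀, ψ r = φ r) ∧
        (∀ r ∈ Set.Ici r₀, |φ r - r| ≤ 2 * ε) ∧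
        1 ≤ derivWithin φ (Set.Ici r₀) r₀ ∧
        derivWithin φ (Set.Ici r₀) r₀ ≤ 1 + C * ε ^ 2 := by
  refine ⟨1/4, ⟨by norm_num, by norm_num⟩, 2, by norm_num, ?_⟩
  intro ε hε hεs h hc hh φ₀ hφ₀
  have hε4 : ε ≤ 1/4 := hεs
  have D : BVPData δ r₀ ε h := ⟨hδ, hr₀, hε, hε4, hc, hh⟩
  classical
  -- the closed ball in the space of bounded continuous functions
  set S : Set (BoundedContinuousFunction ℝ ℝ) := {u | ‖u‖ ≤ 2 * ε} with hS_def
  have hSclosed : IsClosed S := isClosed_le continuous_norm continuous_const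
  haveI : CompleteSpace S := hSclosed.completeSpace_coe
  haveI : Nonempty S := ⟨⟨0, by simp [hS_def]; positivity⟩⟩
  have memb : ∀ u : S, ∀ s : ℝ, |(u : BoundedContinuousFunction ℝ ℝ) s| ≤ 2 * ε := by
    intro u s
    have h1 := BoundedContinuousFunction.norm_coe_le_norm (u : BoundedContinuousFunction ℝ ℝ) s
    rw [Real.norm_eq_abs] at h1
    exact h1.trans u.2
  -- the map
  have contT : ∀ u : S, Continuous
      (fun r => (φ₀ - r₀) + Gint h (u : BoundedContinuousFunction ℝ ℝ) r₀ -
        Gint h (u : BoundedContinuousFunction ℝ ℝ) (max r r₀)) := by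
    intro u
    apply Continuous.sub continuous_const
    exact (D.G_contOn (memb u) (u : BoundedContinuousFunction ℝ ℝ).continuous).comp_continuous
      (continuous_id.max continuous_const) (fun x => le_max_right x r₀)
  have bndT : ∀ u : S, ∀ r : ℝ, ‖(φ₀ - r₀) + Gint h (u : BoundedContinuousFunction ℝ ℝ) r₀ -
      Gint h (u : BoundedContinuousFunction ℝ ℝ) (max r r₀)‖ ≤ 2 * ε := by
    intro u r
    have h1 := (D.G_int (memb u) (u : BoundedContinuousFunction ℝ ℝ).continuous le_rfl).2
    have h2 := (D.G_int (memb u) (u : BoundedContinuousFunction ℝ ℝ).continuous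
      (le_max_right r r₀)).2
    rw [Real.norm_eq_abs]
    have h3 := abs_le.mp h1
    have h4 := abs_le.mp h2
    have h5 := abs_le.mp hφ₀
    rw [abs_le]
    constructor <;> nlinarith
  set T : S → S := fun u =>
    ⟨BoundedContinuousFunction.ofNormedAddCommGroup _ (contT u) (2 * ε) (bndT u),
      BoundedContinuousFunction.norm_ofNormedAddCommGroup_le _ (by positivity) (bndT u)⟩
    with hT_def
  have hTapp : ∀ u : S, ∀ r : ℝ, ((T u : BoundedContinuousFunction ℝ ℝ) : ℝ → ℝ) r =
      (φ₀ - r₀) + Gint h (u : BoundedContinuousFunction ℝ ℝ) r₀ -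
        Gint h (u : BoundedContinuousFunction ℝ ℝ) (max r r₀) := fun u r => rfl
  -- contraction
  have hcontract : ContractingWith (1/2 : ℝ≥0) T := by
    constructor
    · rw [← NNReal.coe_lt_coe]; norm_num
    · apply LipschitzWith.of_dist_le_mul
      intro u v
      rw [Subtype.dist_eq, BoundedContinuousFunction.dist_le (by positivity :
        (0:ℝ) ≤ (1/2 : ℝ≥0) * dist u v)]
      intro r
      have hduv : ∀ s : ℝ, |(u : BoundedContinuousFunction ℝ ℝ) s -
          (v : BoundedContinuousFunction ℝ ℝ) s| ≤ dist u v := by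
        intro s
        have := BoundedContinuousFunction.dist_coe_le_dist (f := (u:BoundedContinuousFunction ℝ ℝ))
          (g := (v:BoundedContinuousFunction ℝ ℝ)) s
        rw [Real.dist_eq] at this
        exact this.trans (le_of_eq (Subtype.dist_eq u v).symm)
      have hd0 : (0:ℝ) ≤ dist u v := dist_nonneg
      have g1 := D.G_diff (memb u) (u:BoundedContinuousFunction ℝ ℝ).continuous (memb v)
        (v:BoundedContinuousFunction ℝ ℝ).continuous hd0 hduv le_rfl
      have g2 := D.G_diff (memb u) (u:BoundedContinuousFunction ℝ ℝ).continuous (memb v)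
        (v:BoundedContinuousFunction ℝ ℝ).continuous hd0 hduv (le_max_right r r₀)
      rw [Real.dist_eq, hTapp u r, hTapp v r]
      have habs : |((φ₀ - r₀) + Gint h (u:BoundedContinuousFunction ℝ ℝ) r₀ -
          Gint h (u:BoundedContinuousFunction ℝ ℝ) (max r r₀)) -
          ((φ₀ - r₀) + Gint h (v:BoundedContinuousFunction ℝ ℝ) r₀ -
          Gint h (v:BoundedContinuousFunction ℝ ℝ) (max r r₀))|
          ≤ ε ^ 2 * dist u v + ε ^ 2 * dist u v := by
        calc |((φ₀ - r₀) + Gint h (u:BoundedContinuousFunction ℝ ℝ) r₀ -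
            Gint h (u:BoundedContinuousFunction ℝ ℝ) (max r r₀)) -
            ((φ₀ - r₀) + Gint h (v:BoundedContinuousFunction ℝ ℝ) r₀ -
            Gint h (v:BoundedContinuousFunction ℝ ℝ) (max r r₀))|
            = |(Gint h (u:BoundedContinuousFunction ℝ ℝ) r₀ -
              Gint h (v:BoundedContinuousFunction ℝ ℝ) r₀) -
              (Gint h (u:BoundedContinuousFunction ℝ ℝ) (max r r₀) -
              Gint h (v:BoundedContinuousFunction ℝ ℝ) (max r r₀))| := by congr 1; ring
          _ ≤ _ := (abs_sub _ _).trans (by gcongr)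
      have hcast : ((1/2 : ℝ≥0) : ℝ) = 1/2 := by norm_num
      rw [hcast]
      have hsq : ε ^ 2 ≤ 1/16 := by nlinarith
      have hq : ε ^ 2 * dist u v + ε ^ 2 * dist u v ≤ 1/2 * dist u v := by
        nlinarith [mul_le_mul_of_nonneg_right hsq hd0]
      linarith [habs]
  -- fixed point
  set uS : S := ContractingWith.fixedPoint T hcontract with huS_def
  have hfix : T uS = uS := hcontract.fixedPoint_isFixedPt
  set uu : ℝ → ℝ := ((uS : BoundedContinuousFunction ℝ ℝ) : ℝ → ℝ) with huu_def
  have huu : ∀ s, |uu s| ≤ 2 * ε := memb uS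
  have huuc : Continuous uu := (uS : BoundedContinuousFunction ℝ ℝ).continuous
  have hfeq : ∀ r : ℝ, uu r = (φ₀ - r₀) + Gint h uu r₀ - Gint h uu (max r r₀) := by
    intro r
    conv_lhs => rw [huu_def, ← hfix]
    exact hTapp uS r
  -- the solution
  set φ : ℝ → ℝ := fun r => r + uu r with hφ_def
  have hEq : ∀ r ∈ Set.Ici r₀, φ r = r + ((φ₀ - r₀) + Gint h uu r₀) - Gint h uu r := by
    intro r hr
    show r + uu r = _
    rw [hfeq r, max_eq_left hr]; ring
  have hFd : ∀ r ∈ Set.Ici r₀, HasDerivWithinAt φ (1 + Fint h uu r) (Set.Ici r₀) r := by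
    intro r hr
    have base : HasDerivWithinAt (fun x => x + ((φ₀ - r₀) + Gint h uu r₀) - Gint h uu x)
        (1 - -(Fint h uu r)) (Set.Ici r₀) r :=
      ((hasDerivWithinAt_id r _).add_const _).sub (D.G_hasDeriv huu huuc hr)
    have base' : HasDerivWithinAt (fun x => x + ((φ₀ - r₀) + Gint h uu r₀) - Gint h uu x)
        (1 + Fint h uu r) (Set.Ici r₀) r := by
      convert base using 1; ring
    exact base'.congr (fun x hx => hEq x hx) (hEq r hr)
  have hdw : ∀ r ∈ Set.Ici r₀, derivWithin φ (Set.Ici r₀) r = 1 + Fint h uu r :=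
    fun r hr => (hFd r hr).derivWithin ((uniqueDiffOn_Ici r₀) r hr)
  have prop1 : ∀ r ∈ Set.Ici r₀,
      HasDerivWithinAt φ (derivWithin φ (Set.Ici r₀) r) (Set.Ici r₀) r := by
    intro r hr; rw [hdw r hr]; exact hFd r hr
  have prop2 : ∀ r ∈ Set.Ici r₀, HasDerivWithinAt (fun s => derivWithin φ (Set.Ici r₀) s)
      (-(h r * φ r)) (Set.Ici r₀) r := by
    intro r hr
    have base : HasDerivWithinAt (fun s => 1 + Fint h uu s) (-(h r * (r + uu r)))
        (Set.Ici r₀) r := (D.F_hasDeriv huu huuc hr).const_add 1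
    exact base.congr (fun x hx => hdw x hx) (hdw r hr)
  have prop3 : φ r₀ = φ₀ := by
    show r₀ + uu r₀ = φ₀
    rw [hfeq r₀, max_self]; ring
  have prop4 : Filter.Tendsto (fun r => φ r / r) Filter.atTop (nhds 1) := by
    have hz : Filter.Tendsto (fun r : ℝ => uu r / r) Filter.atTop (nhds 0) := by
      have hlim : Filter.Tendsto (fun r : ℝ => 2 * ε * r⁻¹) Filter.atTop (nhds (2 * ε * 0)) :=
        tendsto_inv_atTop_zero.const_mul (2 * ε)
      rw [mul_zero] at hlim
      refine squeeze_zero_norm' ?_ hlim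
      filter_upwards [Filter.eventually_ge_atTop (1:ℝ)] with r hr1
      have hr0 : (0:ℝ) < r := lt_of_lt_of_le one_pos hr1
      rw [Real.norm_eq_abs, abs_div, abs_of_pos hr0, div_le_iff₀ hr0]
      calc |uu r| ≤ 2 * ε := huu r
        _ = 2 * ε * 1 := (mul_one _).symm
        _ ≤ 2 * ε * (r⁻¹ * r) := by rw [inv_mul_cancel₀ hr0.ne']
        _ = 2 * ε * r⁻¹ * r := by ring
    have hsum := (tendsto_const_nhds (x := (1:ℝ)) (f := Filter.atTop)).add hz
    rw [add_zero] at hsum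
    refine hsum.congr' ?_
    filter_upwards [Filter.eventually_ge_atTop (1:ℝ)] with r hr1
    have hr0 : r ≠ 0 := by positivity
    show 1 + uu r / r = φ r / r
    show 1 + uu r / r = (r + uu r) / r
    rw [add_div, div_self hr0]
  have prop5 : ∀ r ∈ Set.Ici r₀, |φ r - r| ≤ 2 * ε := by
    intro r _
    show |r + uu r - r| ≤ 2 * ε
    rw [add_sub_cancel_left]
    exact huu r
  have hF0 : 0 ≤ Fint h uu r₀ :=
    setIntegral_nonneg measurableSet_Ioi (fun s hs => D.k_nonneg huu (le_of_lt hs))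
  have hF2 : Fint h uu r₀ ≤ 2 * ε ^ 2 := le_of_abs_le (D.F_int huu huuc le_rfl).2
  refine ⟨φ, ⟨prop1, prop2, prop3, prop4⟩, ?_, prop5, ?_, ?_⟩
  · rintro ψ ⟨hψ1, hψ2, hψ3, hψ4⟩
    exact bvp_unique' hδ hr₀ hε hε4 hc hh φ ψ prop1 prop2 hψ1 hψ2 (by rw [hψ3, prop3]) prop4 hψ4
  · rw [hdw r₀ Set.self_mem_Ici]; linarith
  · rw [hdw r₀ Set.self_mem_Ici]; linarith
end
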